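/- arXiv:0912.5259 — 5 statements merged into one kernel-verified Lean document; each statement's English description precedes it below -/
import Mathlib

section
/- Let K be a field of characteristic not 2 and let τ be the K-automorphism of the rational function field K(x,y) of order 2 defined by τ(x) = a/x and τ(y) = a/y for a fixed a ∈ K^×. Then the fixed field K(x,y)^⟨τ⟩ equals K(t₁, t₂), where t₁ = (xy + a)/(x + y) and t₂ = (xy − a)/(x − y). -/
/-!
Write `t₁ = (xy + a)/(x + y)` and `t₂ = (xy - a)/(x - y)`. Substituting `a/x, a/y` for `x, y`
multiplies numerator and denominator of each `tᵢ` by the same factor, so `E = K(t₁, t₂)` is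
fixed by `τ`. Conversely `y = (a - t₁x)/(t₁ - x)` lies in `E(x)`, and `x` is a root of
`(t₁ - t₂)T² + 2(t₁t₂ - a)T + a(t₁ - t₂)` over `E`, whose leading coefficient
`2x(a - y²)/(x² - y²)` is nonzero because `char K ≠ 2`. Hence `[K(x,y) : E] ≤ 2`, while
Artin's theorem gives `[K(x,y) : K(x,y)^τ] = 2`; together with `E ≤ K(x,y)^τ` this forces
equality.
-/

open MvPolynomial IntermediateField

section Invariants

variable {L : Type*} [Field L]

def sumInvariant (c x y : L) : L := (x * y + c) / (x + y)

def diffInvariant (c x y : L) : L := (x * y - c) / (x - y)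

variable {c x y : L}

theorem map_sumInvariant {M G : Type*} [Field M] [FunLike G L M] [RingHomClass G L M] (f : G) :
    f (sumInvariant c x y) = sumInvariant (f c) (f x) (f y) := by
  simp [sumInvariant]

theorem map_diffInvariant {M G : Type*} [Field M] [FunLike G L M] [RingHomClass G L M] (f : G) :
    f (diffInvariant c x y) = diffInvariant (f c) (f x) (f y) := by
  simp [diffInvariant]

theorem sumInvariant_div_div (hc : c ≠ 0) (hx : x ≠ 0) (hy : y ≠ 0) :
    sumInvariant c (c / x) (c / y) = sumInvariant c x y := by
  unfold sumInvariant
  rw [show c / x * (c / y) + c = c / (x * y) * (x * y + c) by field_simp; ring,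
    show c / x + c / y = c / (x * y) * (x + y) by field_simp; ring,
    mul_div_mul_left _ _ (by simp [hc, hx, hy])]

theorem diffInvariant_div_div (hc : c ≠ 0) (hx : x ≠ 0) (hy : y ≠ 0) :
    diffInvariant c (c / x) (c / y) = diffInvariant c x y := by
  unfold diffInvariant
  rw [show c / x * (c / y) - c = -(c / (x * y)) * (x * y - c) by field_simp; ring,
    show c / x - c / y = -(c / (x * y)) * (x - y) by field_simp; ring,
    mul_div_mul_left _ _ (by simp [hc, hx, hy])]

theorem sumInvariant_sub_diffInvariant (hs : x + y ≠ 0) (hd : x - y ≠ 0) :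
    sumInvariant c x y - diffInvariant c x y = 2 * x * (c - y ^ 2) / ((x + y) * (x - y)) := by
  unfold sumInvariant diffInvariant
  field_simp
  ring

theorem sumInvariant_sub_left (hs : x + y ≠ 0) :
    sumInvariant c x y - x = (c - x ^ 2) / (x + y) := by
  unfold sumInvariant
  field_simp
  ring

theorem eq_div_sumInvariant_sub (hs : x + y ≠ 0) (hcx : c - x ^ 2 ≠ 0) :
    y = (c - sumInvariant c x y * x) / (sumInvariant c x y - x) := by
  have hne : sumInvariant c x y - x ≠ 0 := by
    rw [sumInvariant_sub_left hs]; exact div_ne_zero hcx hs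
  rw [eq_div_iff hne]
  unfold sumInvariant
  field_simp
  ring

theorem quadratic_sumInvariant_diffInvariant (hs : x + y ≠ 0) (hd : x - y ≠ 0) :
    (sumInvariant c x y - diffInvariant c x y) * x ^ 2
      + 2 * (sumInvariant c x y * diffInvariant c x y - c) * x
      + c * (sumInvariant c x y - diffInvariant c x y) = 0 := by
  unfold sumInvariant diffInvariant
  field_simp
  ring

end Invariants

section FixedField

variable {K L : Type*} [Field K] [Field L] [Algebra K L] {σ : L ≃ₐ[K] L}

theorem mem_fixedField_zpowers_iff {t : L} :
    t ∈ fixedField (Subgroup.zpowers σ) ↔ σ t = t := by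
  rw [mem_fixedField_iff]
  refine ⟨fun h => h σ (Subgroup.mem_zpowers σ), fun h f hf => ?_⟩
  exact (Subgroup.zpowers_le (H := MulAction.stabilizer (L ≃ₐ[K] L) t)).2 h hf

theorem finrank_fixedField_zpowers (hσ : IsOfFinOrder σ) :
    Module.finrank (fixedField (Subgroup.zpowers σ)) L = orderOf σ := by
  have : Finite (Subgroup.zpowers σ) := hσ.finite_zpowers.to_subtype
  have := Fintype.ofFinite (Subgroup.zpowers σ)
  rw [← Nat.card_zpowers, Nat.card_eq_fintype_card]
  exact FixedPoints.finrank_eq_card (Subgroup.zpowers σ) L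

end FixedField

section SimpleExtension

variable {E L : Type*} [Field E] [Field L] [Algebra E L] {x : L}

theorem finiteDimensional_of_adjoin_simple_eq_top (htop : E⟮x⟯ = ⊤) (hx : IsIntegral E x) :
    FiniteDimensional E L := by
  have := adjoin.finiteDimensional hx
  rw [htop] at this
  exact topEquiv.toLinearEquiv.finiteDimensional

theorem finrank_le_natDegree_of_adjoin_simple_eq_top (htop : E⟮x⟯ = ⊤) {p : Polynomial E}
    (hp : p ≠ 0) (hx : Polynomial.aeval x p = 0) : Module.finrank E L ≤ p.natDegree := by
  rw [← finrank_top', ← htop, adjoin.finrank (IsAlgebraic.isIntegral ⟨p, hp, hx⟩)]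
  exact Polynomial.natDegree_le_natDegree (minpoly.degree_le_of_ne_zero E x hp hx)

end SimpleExtension

section InvariantField

variable {K L : Type*} [Field K] [Field L] [Algebra K L] {a : K} {x y : L}

variable (a x y) in
def invariantField : IntermediateField K L :=
  adjoin K {sumInvariant (algebraMap K L a) x y, diffInvariant (algebraMap K L a) x y}

theorem invariantField_le_fixedField {σ : L ≃ₐ[K] L} (ha : a ≠ 0) (hx : x ≠ 0)
    (hy : y ≠ 0) (hσx : σ x = algebraMap K L a / x) (hσy : σ y = algebraMap K L a / y) :
    invariantField a x y ≤ fixedField (Subgroup.zpowers σ) := by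
  have hc : algebraMap K L a ≠ 0 := (map_ne_zero _).2 ha
  rw [invariantField, adjoin_le_iff]
  rintro t (rfl | rfl) <;> rw [SetLike.mem_coe, mem_fixedField_zpowers_iff]
  · rw [map_sumInvariant, σ.commutes, hσx, hσy, sumInvariant_div_div hc hx hy]
  · rw [map_diffInvariant, σ.commutes, hσx, hσy, diffInvariant_div_div hc hx hy]

theorem adjoin_invariantField_eq_top (htop : adjoin K {x, y} = ⊤) (hs : x + y ≠ 0)
    (hcx : algebraMap K L a - x ^ 2 ≠ 0) : (invariantField a x y)⟮x⟯ = ⊤ := by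
  let E := invariantField a x y
  have hx : x ∈ E⟮x⟯ := mem_adjoin_simple_self E x
  have hsum : sumInvariant (algebraMap K L a) x y ∈ E⟮x⟯ :=
    E⟮x⟯.algebraMap_mem (⟨_, subset_adjoin K _ (Set.mem_insert _ _)⟩ : E)
  have hc : algebraMap K L a ∈ E⟮x⟯ := (E⟮x⟯.restrictScalars K).algebraMap_mem a
  have hy : y ∈ E⟮x⟯ := by
    have := div_mem (sub_mem hc (mul_mem hsum hx)) (sub_mem hsum hx)
    rwa [← eq_div_sumInvariant_sub hs hcx] at this
  rw [← restrictScalars_eq_top_iff (K := K), eq_top_iff, ← htop, adjoin_le_iff]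
  exact Set.insert_subset_iff.2 ⟨hx, Set.singleton_subset_iff.2 hy⟩

theorem exists_quadratic_invariantField (h2 : (2 : L) ≠ 0) (hx : x ≠ 0) (hs : x + y ≠ 0)
    (hd : x - y ≠ 0) (hcy : algebraMap K L a - y ^ 2 ≠ 0) :
    ∃ p : Polynomial (invariantField a x y),
      p ≠ 0 ∧ p.natDegree ≤ 2 ∧ Polynomial.aeval x p = 0 := by
  let s : invariantField a x y := ⟨_, subset_adjoin K _ (Set.mem_insert _ _)⟩
  let d : invariantField a x y := ⟨_, subset_adjoin K _ (Set.mem_insert_of_mem _ rfl)⟩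
  let c := algebraMap K (invariantField a x y) a
  have hsd : s - d ≠ 0 := by
    rw [ne_eq, ← Subtype.val_inj]
    change sumInvariant _ x y - diffInvariant _ x y ≠ 0
    rw [sumInvariant_sub_diffInvariant hs hd]
    exact div_ne_zero (mul_ne_zero (mul_ne_zero h2 hx) hcy) (mul_ne_zero hs hd)
  refine ⟨Polynomial.C (s - d) * Polynomial.X ^ 2 + Polynomial.C (2 * (s * d - c)) * Polynomial.X
    + Polynomial.C (c * (s - d)), fun h => ?_, Polynomial.natDegree_quadratic_le, ?_⟩
  · have := Polynomial.degree_quadratic (b := 2 * (s * d - c)) (c := c * (s - d)) hsd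
    rw [h] at this
    simp at this
  · simp only [map_add, map_mul, map_sub, map_pow, Polynomial.aeval_C, Polynomial.aeval_X,
      IntermediateField.algebraMap_apply]
    exact quadratic_sumInvariant_diffInvariant hs hd

end InvariantField

section RationalFunctions

variable {K F ι : Type*} [Field K] [Field F] [Algebra K F] [Algebra (MvPolynomial ι K) F]
  [IsScalarTower K (MvPolynomial ι K) F]

theorem aeval_algebraMap_X (p : MvPolynomial ι K) :
    aeval (fun i => algebraMap (MvPolynomial ι K) F (X i)) p =
      algebraMap (MvPolynomial ι K) F p :=
  congr($(aeval_unique (IsScalarTower.toAlgHom K (MvPolynomial ι K) F)) p).symm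

theorem aeval_algebraMap_X_ne_zero [IsFractionRing (MvPolynomial ι K) F] {p : MvPolynomial ι K}
    (f : ι → K) (h : eval f p ≠ 0) :
    aeval (fun i => algebraMap (MvPolynomial ι K) F (X i)) p ≠ 0 := by
  rw [aeval_algebraMap_X, ne_eq, IsFractionRing.to_map_eq_zero_iff]
  rintro rfl
  exact h (map_zero _)

variable (K F) in
theorem adjoin_range_algebraMap_X [IsFractionRing (MvPolynomial ι K) F] :
    adjoin K (Set.range fun i => algebraMap (MvPolynomial ι K) F (X i)) = ⊤ := by
  refine eq_top_iff.2 fun z _ => ?_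
  obtain ⟨p, q, -, rfl⟩ := IsFractionRing.div_surjective (A := MvPolynomial ι K) z
  exact (mem_adjoin_range_iff K _ _).2 ⟨p, q, by rw [aeval_algebraMap_X, aeval_algebraMap_X]⟩

theorem algHom_ext_of_algebraMap_X [IsFractionRing (MvPolynomial ι K) F] {M : Type*} [Semiring M]
    [Algebra K M] {f g : F →ₐ[K] M}
    (h : ∀ i, f (algebraMap (MvPolynomial ι K) F (X i)) =
      g (algebraMap (MvPolynomial ι K) F (X i))) :
    f = g :=
  IsLocalization.algHom_ext (nonZeroDivisors _) (MvPolynomial.algHom_ext h)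

end RationalFunctions

/-- Lemma (HHR08): for the involution `τ : x ↦ a/x, y ↦ a/y` of `K(x,y)`
(`char K ≠ 2`, `a ∈ Kˣ`), the fixed field is `K(t₁,t₂)` with
`t₁ = (xy+a)/(x+y)` and `t₂ = (xy-a)/(x-y)`. -/
theorem fixed_field_neg_I2 (K F : Type*) [Field K] [Field F]
    [Algebra K F] [Algebra (MvPolynomial (Fin 2) K) F]
    [IsScalarTower K (MvPolynomial (Fin 2) K) F]
    [IsFractionRing (MvPolynomial (Fin 2) K) F]
    (h2 : (2 : K) ≠ 0) (a : K) (ha : a ≠ 0)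
    (x y : F)
    (hx : x = algebraMap (MvPolynomial (Fin 2) K) F (X 0))
    (hy : y = algebraMap (MvPolynomial (Fin 2) K) F (X 1))
    (σ : F ≃ₐ[K] F)
    (hσx : σ x = algebraMap K F a / x)
    (hσy : σ y = algebraMap K F a / y) :
    fixedField (Subgroup.zpowers σ) =
      adjoin K {(x * y + algebraMap K F a) / (x + y),
                (x * y - algebraMap K F a) / (x - y)} := by
  have hxy : (fun i => algebraMap (MvPolynomial (Fin 2) K) F (X i)) = ![x, y] := by
    ext i; fin_cases i <;> simp [hx, hy]
  have hne (p : MvPolynomial (Fin 2) K) (f : Fin 2 → K) (h : eval f p ≠ 0) :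
      aeval ![x, y] p ≠ 0 :=
    hxy ▸ aeval_algebraMap_X_ne_zero f h
  have hx0 : x ≠ 0 := by simpa using (hne (X 0) ![1, 1] (by simp) :)
  have hy0 : y ≠ 0 := by simpa using (hne (X 1) ![1, 1] (by simp) :)
  have hs : x + y ≠ 0 := by simpa using (hne (X 0 + X 1) ![1, 0] (by simp) :)
  have hd : x - y ≠ 0 := by simpa using (hne (X 0 - X 1) ![1, 0] (by simp) :)
  have hcx : algebraMap K F a - x ^ 2 ≠ 0 := by
    simpa using (hne (C a - X 0 ^ 2) 0 (by simp [ha]) :)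
  have hcy : algebraMap K F a - y ^ 2 ≠ 0 := by
    simpa using (hne (C a - X 1 ^ 2) 0 (by simp [ha]) :)
  have hσ2 : σ ^ 2 = 1 := AlgEquiv.coe_toAlgHom_injective <|
    algHom_ext_of_algebraMap_X (ι := Fin 2) <| Fin.forall_fin_two.2
      ⟨by simp [← hx, pow_two, hσx, ha], by simp [← hy, pow_two, hσy, ha]⟩
  have hσ1 : σ ≠ 1 := fun h => hcx <| by
    rw [h, AlgEquiv.one_apply, eq_div_iff hx0] at hσx
    rw [← hσx]; ring
  have hord : orderOf σ = 2 := orderOf_eq_prime hσ2 hσ1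
  have htop : (invariantField a x y)⟮x⟯ = ⊤ := adjoin_invariantField_eq_top
    (by rw [← Matrix.range_cons_cons_empty, ← hxy, adjoin_range_algebraMap_X]) hs hcx
  obtain ⟨p, hp0, hp2, hpx⟩ :=
    exists_quadratic_invariantField (map_ofNat (algebraMap K F) 2 ▸ (map_ne_zero _).2 h2)
      hx0 hs hd hcy
  have := finiteDimensional_of_adjoin_simple_eq_top htop (IsAlgebraic.isIntegral ⟨p, hp0, hpx⟩)
  refine (eq_of_le_of_finrank_le' (invariantField_le_fixedField ha hx0 hy0 hσx hσy) ?_).symm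
  rw [finrank_fixedField_zpowers (isOfFinOrder_iff_pow_eq_one.2 ⟨2, two_pos, hσ2⟩), hord]
  exact (finrank_le_natDegree_of_adjoin_simple_eq_top htop hp0 hpx).trans hp2
end

section
/- Let K be any field and let τ, λ be the K-automorphisms of K(x,y,z,w) given by τ = (x y)(z w) (swapping x with y and z with w) and λ = (x z)(y w). Then K(x,y,z,w)^⟨τ,λ⟩ = K(v₀, v₁, v₂, v₃), where v₀ = x + y + z + w, v₁ = (x + y − z − w)/(xy − zw), v₂ = (x − y − z + w)/(xw − yz), and v₃ = (x − y + z − w)/(xz − yw). -/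
open MvPolynomial IntermediateField Module

set_option maxHeartbeats 2000000

/-- Every subfield of `F = Frac(K[x₀,...,x₃])` containing the base field `K` and the four
variables is all of `F`. -/
private lemma fixed_field_V4_gen {K F : Type*} [Field K] [Field F] [Algebra K F]
    [Algebra (MvPolynomial (Fin 4) K) F]
    [IsScalarTower K (MvPolynomial (Fin 4) K) F] [IsFractionRing (MvPolynomial (Fin 4) K) F]
    (M : Subfield F) (hK : ∀ k : K, algebraMap K F k ∈ M)
    (h : ∀ i : Fin 4, algebraMap (MvPolynomial (Fin 4) K) F (X i) ∈ M) (f : F) : f ∈ M := by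
  have hpoly : ∀ P : MvPolynomial (Fin 4) K, algebraMap (MvPolynomial (Fin 4) K) F P ∈ M := by
    intro P
    induction P using MvPolynomial.induction_on with
    | C k =>
      rw [show (MvPolynomial.C k : MvPolynomial (Fin 4) K) = algebraMap K _ k from rfl,
        ← IsScalarTower.algebraMap_apply]
      exact hK k
    | add p q hp hq => rw [map_add]; exact M.add_mem hp hq
    | mul_X p i hp => rw [map_mul]; exact M.mul_mem hp (h i)
  obtain ⟨p, q, hq, rfl⟩ := IsFractionRing.div_surjective (A := MvPolynomial (Fin 4) K) f
  exact M.div_mem (hpoly p) (hpoly q)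

/-- If `F = E(m)(n)` with `m`, `n` roots of monic quadratics over `E`, then `[F : E] ≤ 4`. -/
private lemma fixed_field_V4_rank {K F : Type*} [Field K] [Field F] [Algebra K F]
    (E : IntermediateField K F) (m n : F) (s1 c1 s2 c2 : ↥E)
    (h1 : m * m - (s1 : F) * m + (c1 : F) = 0)
    (h2 : n * n - (s2 : F) * n + (c2 : F) = 0)
    (htop : ∀ f : F, f ∈ IntermediateField.adjoin (↥(IntermediateField.adjoin ↥E {m})) {n}) :
    FiniteDimensional ↥E F ∧ finrank ↥E F ≤ 4 := by
  classical
  have key : ∀ (L : Type _) [Field L] [Algebra L F] (t : F) (si ci : L)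
      (h : t * t - (algebraMap L F si) * t + (algebraMap L F ci) = 0),
      IsIntegral L t ∧ (minpoly L t).natDegree ≤ 2 := by
    intro L _ _ t si ci h
    set P : Polynomial L := Polynomial.X ^ 2 +
      (Polynomial.C (-si) * Polynomial.X + Polynomial.C ci) with hP
    have hPdeg : (Polynomial.C (-si) * Polynomial.X + Polynomial.C ci).degree ≤ 1 :=
      Polynomial.degree_linear_le
    have hPdeg' : (Polynomial.C (-si) * Polynomial.X + Polynomial.C ci).degree
        < ((2 : ℕ) : WithBot ℕ) := lt_of_le_of_lt hPdeg (by decide)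
    have hPmonic : P.Monic := Polynomial.monic_X_pow_add hPdeg'
    have hPeval : Polynomial.aeval t P = 0 := by
      simp only [hP, map_add, map_mul, map_pow, Polynomial.aeval_X, Polynomial.aeval_C]
      rw [map_neg]
      linear_combination h
    have hint : IsIntegral L t := ⟨P, hPmonic, by rwa [← Polynomial.aeval_def]⟩
    refine ⟨hint, ?_⟩
    have hdegP : P.degree = 2 := by
      rw [hP]
      rw [Polynomial.degree_add_eq_left_of_degree_lt]
      · exact Polynomial.degree_X_pow 2
      · rw [Polynomial.degree_X_pow]
        exact hPdeg'
    have := minpoly.min (A := L) (x := t) hPmonic hPeval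
    rw [hdegP] at this
    exact Polynomial.natDegree_le_iff_degree_le.2 this
  obtain ⟨hm_int, hm_deg⟩ := key ↥E m s1 c1 (by
    rwa [show algebraMap ↥E F s1 = (s1 : F) from rfl, show algebraMap ↥E F c1 = (c1 : F) from rfl])
  set E1 : IntermediateField ↥E F := IntermediateField.adjoin ↥E {m} with hE1
  have hfd1 : FiniteDimensional ↥E ↥E1 := IntermediateField.adjoin.finiteDimensional hm_int
  have hrk1 : finrank ↥E ↥E1 ≤ 2 := by
    rw [hE1, IntermediateField.adjoin.finrank hm_int]
    exact hm_deg
  obtain ⟨hn_int, hn_deg⟩ := key ↥E1 n (algebraMap ↥E ↥E1 s2) (algebraMap ↥E ↥E1 c2) (by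
    rw [← IsScalarTower.algebraMap_apply, ← IsScalarTower.algebraMap_apply]
    rwa [show algebraMap ↥E F s2 = (s2 : F) from rfl, show algebraMap ↥E F c2 = (c2 : F) from rfl])
  have htopeq : IntermediateField.adjoin ↥E1 {n} = ⊤ := by
    apply eq_top_iff.2
    intro f _
    exact htop f
  have hfd2' : FiniteDimensional ↥E1 ↥(⊤ : IntermediateField ↥E1 F) := by
    rw [← htopeq]; exact IntermediateField.adjoin.finiteDimensional hn_int
  have hfd2 : FiniteDimensional ↥E1 F :=
    Module.Finite.equiv (IntermediateField.topEquiv (F := ↥E1) (E := F)).toLinearEquiv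
  have hrk2 : finrank ↥E1 F ≤ 2 := by
    rw [← (IntermediateField.topEquiv (F := ↥E1) (E := F)).toLinearEquiv.finrank_eq, ← htopeq,
      IntermediateField.adjoin.finrank hn_int]
    exact hn_deg
  have hfd : FiniteDimensional ↥E F := FiniteDimensional.trans ↥E ↥E1 F
  refine ⟨hfd, ?_⟩
  rw [← Module.finrank_mul_finrank ↥E ↥E1 F]
  calc finrank ↥E ↥E1 * finrank ↥E1 F ≤ 2 * 2 := Nat.mul_le_mul hrk1 hrk2
  _ = 4 := rfl

theorem fixed_field_V4_four_vars (K F : Type*) [Field K] [Field F]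
    [Algebra K F] [Algebra (MvPolynomial (Fin 4) K) F]
    [IsScalarTower K (MvPolynomial (Fin 4) K) F]
    [IsFractionRing (MvPolynomial (Fin 4) K) F]
    (x y z w : F)
    (hx : x = algebraMap (MvPolynomial (Fin 4) K) F (X 0))
    (hy : y = algebraMap (MvPolynomial (Fin 4) K) F (X 1))
    (hz : z = algebraMap (MvPolynomial (Fin 4) K) F (X 2))
    (hw : w = algebraMap (MvPolynomial (Fin 4) K) F (X 3))
    (τ lam : F ≃ₐ[K] F)
    (hτx : τ x = y) (hτy : τ y = x) (hτz : τ z = w) (hτw : τ w = z)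
    (hlx : lam x = z) (hlz : lam z = x) (hly : lam y = w) (hlw : lam w = y) :
    fixedField (Subgroup.closure {τ, lam}) =
      adjoin K {x + y + z + w,
        (x + y - z - w) / (x * y - z * w),
        (x - y - z + w) / (x * w - y * z),
        (x - y + z - w) / (x * z - y * w)} := by
  classical
  -- nonvanishing of basic polynomials
  have algnz : ∀ (P : MvPolynomial (Fin 4) K) (v : Fin 4 → K), MvPolynomial.eval v P = 1 →
      algebraMap (MvPolynomial (Fin 4) K) F P ≠ 0 := by
    intro P v h hP
    have : P = 0 := IsFractionRing.injective (MvPolynomial (Fin 4) K) F (by rw [hP, map_zero])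
    rw [this, map_zero] at h
    exact one_ne_zero h.symm
  have hrw : ∀ P Q : MvPolynomial (Fin 4) K,
      algebraMap (MvPolynomial (Fin 4) K) F P - algebraMap (MvPolynomial (Fin 4) K) F Q
        = algebraMap (MvPolynomial (Fin 4) K) F (P - Q) := fun P Q => (map_sub _ _ _).symm
  have hp0 : x + y - z - w ≠ 0 := by
    rw [hx, hy, hz, hw, ← map_add, hrw, hrw]
    exact algnz _ ![1,0,0,0] (by simp)
  have hq0 : x - y - z + w ≠ 0 := by
    rw [hx, hy, hz, hw, hrw, hrw, ← map_add]
    exact algnz _ ![1,0,0,0] (by simp)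
  have hr0 : x - y + z - w ≠ 0 := by
    rw [hx, hy, hz, hw, hrw, ← map_add, hrw]
    exact algnz _ ![1,0,0,0] (by simp)
  have hA0 : x * y - z * w ≠ 0 := by
    rw [hx, hy, hz, hw, ← map_mul, ← map_mul, hrw]
    exact algnz _ ![1,1,0,0] (by simp)
  have hB0 : x * w - y * z ≠ 0 := by
    rw [hx, hy, hz, hw, ← map_mul, ← map_mul, hrw]
    exact algnz _ ![1,0,0,1] (by simp)
  have hC0 : x * z - y * w ≠ 0 := by
    rw [hx, hy, hz, hw, ← map_mul, ← map_mul, hrw]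
    exact algnz _ ![1,0,1,0] (by simp)
  have hxy : x ≠ y := by
    intro h
    apply algnz (X 0 - X 1) ![1,0,0,0] (by simp)
    rw [← hrw, ← hx, ← hy, h, sub_self]
  have hxz : x ≠ z := by
    intro h
    apply algnz (X 0 - X 2) ![1,0,0,0] (by simp)
    rw [← hrw, ← hx, ← hz, h, sub_self]
  have hxw : x ≠ w := by
    intro h
    apply algnz (X 0 - X 3) ![1,0,0,0] (by simp)
    rw [← hrw, ← hx, ← hw, h, sub_self]
  have hyz : y ≠ z := by
    intro h
    apply algnz (X 1 - X 2) ![0,1,0,0] (by simp)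
    rw [← hrw, ← hy, ← hz, h, sub_self]
  have hyw : y ≠ w := by
    intro h
    apply algnz (X 1 - X 3) ![0,1,0,0] (by simp)
    rw [← hrw, ← hy, ← hw, h, sub_self]
  have hzw : z ≠ w := by
    intro h
    apply algnz (X 2 - X 3) ![0,0,1,0] (by simp)
    rw [← hrw, ← hz, ← hw, h, sub_self]
  -- automorphism extensionality
  have algext : ∀ σ σ' : F ≃ₐ[K] F, σ x = σ' x → σ y = σ' y → σ z = σ' z → σ w = σ' w →
      σ = σ' := by
    intro σ σ' h0 h1 h2 h3
    have : (σ : F →+* F) = (σ' : F →+* F) := by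
      apply IsLocalization.ringHom_ext (nonZeroDivisors (MvPolynomial (Fin 4) K))
      apply MvPolynomial.ringHom_ext
      · intro k
        simp only [RingHom.comp_apply]
        rw [show (MvPolynomial.C k : MvPolynomial (Fin 4) K) = algebraMap K _ k from rfl,
          ← IsScalarTower.algebraMap_apply]
        simp [AlgEquiv.commutes]
      · intro i
        have hfin4 : ∀ j : Fin 4, j = 0 ∨ j = 1 ∨ j = 2 ∨ j = 3 := by decide
        rcases hfin4 i with rfl|rfl|rfl|rfl <;> simp only [RingHom.comp_apply, RingHom.coe_coe] <;>
          [rw [← hx]; rw [← hy]; rw [← hz]; rw [← hw]] <;> assumption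
    exact AlgEquiv.ext fun f => RingHom.congr_fun this f
  -- action of the product τ * lam
  have hμx : (τ * lam) x = w := by rw [AlgEquiv.mul_apply, hlx, hτz]
  have hμy : (τ * lam) y = z := by rw [AlgEquiv.mul_apply, hly, hτw]
  have hμz : (τ * lam) z = y := by rw [AlgEquiv.mul_apply, hlz, hτx]
  have hμw : (τ * lam) w = x := by rw [AlgEquiv.mul_apply, hlw, hτy]
  -- group relations
  have hττ : τ * τ = 1 := by
    apply algext <;> rw [AlgEquiv.mul_apply, AlgEquiv.one_apply] <;>
      simp [hτx, hτy, hτz, hτw]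
  have hll : lam * lam = 1 := by
    apply algext <;> rw [AlgEquiv.mul_apply, AlgEquiv.one_apply] <;>
      simp [hlx, hly, hlz, hlw]
  have hcomm : lam * τ = τ * lam := by
    apply algext <;> rw [AlgEquiv.mul_apply] <;>
      simp [hτx, hτy, hτz, hτw, hlx, hly, hlz, hlw, hμx, hμy, hμz, hμw]
  have hτμ1 : τ * (τ * lam) = lam := by rw [← mul_assoc, hττ, one_mul]
  have hμτ : (τ * lam) * τ = lam := by rw [mul_assoc, hcomm, ← mul_assoc, hττ, one_mul]
  have hlμ1 : lam * (τ * lam) = τ := by rw [← mul_assoc, hcomm, mul_assoc, hll, mul_one]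
  have hμl : (τ * lam) * lam = τ := by rw [mul_assoc, hll, mul_one]
  have hμμ : (τ * lam) * (τ * lam) = 1 := by rw [← mul_assoc, hμτ, hll]
  -- distinctness
  have h1τ : τ ≠ 1 := fun h => hxy (by rw [← hτx, h, AlgEquiv.one_apply])
  have h1l : lam ≠ 1 := fun h => hxz (by rw [← hlx, h, AlgEquiv.one_apply])
  have h1μ : τ * lam ≠ 1 := fun h => hxw (by rw [← hμx, h, AlgEquiv.one_apply])
  have hτl : τ ≠ lam := fun h => hyz (by rw [← hτx, h, hlx])
  have hτμ : τ ≠ τ * lam := fun h => hyw (by rw [← hτx, h, hμx])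
  have hlμ : lam ≠ τ * lam := fun h => hzw (by rw [← hlx, h, hμx])
  -- the explicit subgroup
  have hcar : ∀ g ∈ ({1, τ, lam, τ * lam} : Set (F ≃ₐ[K] F)),
      ∀ g' ∈ ({1, τ, lam, τ * lam} : Set (F ≃ₐ[K] F)),
      g * g' ∈ ({1, τ, lam, τ * lam} : Set (F ≃ₐ[K] F)) := by
    rintro g (rfl|rfl|rfl|rfl) g' (rfl|rfl|rfl|rfl) <;>
      simp only [one_mul, mul_one, hττ, hll, hτμ1, hμτ, hlμ1, hμl, hμμ, Set.mem_insert_iff,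
        Set.mem_singleton_iff] <;> tauto
  set H : Subgroup (F ≃ₐ[K] F) :=
    { carrier := {1, τ, lam, τ * lam}
      one_mem' := by simp
      mul_mem' := fun {a b} ha hb => hcar a ha b hb
      inv_mem' := by
        rintro g (rfl|rfl|rfl|rfl)
        · simp
        · rw [inv_eq_of_mul_eq_one_right hττ]; simp [Set.mem_insert_iff]
        · rw [inv_eq_of_mul_eq_one_right hll]; simp [Set.mem_insert_iff]
        · rw [inv_eq_of_mul_eq_one_right hμμ]; simp [Set.mem_insert_iff] } with hHdef
  have hmemH : ∀ g, g ∈ H ↔ g ∈ ({1, τ, lam, τ * lam} : Set (F ≃ₐ[K] F)) := fun g => Iff.rfl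
  have hclos : Subgroup.closure {τ, lam} = H := by
    apply le_antisymm
    · rw [Subgroup.closure_le]
      rintro g (rfl|rfl) <;> simp [hmemH, Set.mem_insert_iff]
    · intro g hg
      rcases (hmemH g).1 hg with rfl|rfl|rfl|rfl
      · exact one_mem _
      · exact Subgroup.subset_closure (by simp)
      · exact Subgroup.subset_closure (by simp)
      · exact mul_mem (Subgroup.subset_closure (by simp)) (Subgroup.subset_closure (by simp))
  have hfin : (H : Set (F ≃ₐ[K] F)).Finite := by
    rw [show (H : Set (F ≃ₐ[K] F)) = {1, τ, lam, τ * lam} from rfl]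
    exact Set.toFinite _
  have : Fintype H := hfin.fintype
  have hcard : Fintype.card H = 4 := by
    rw [← Nat.card_eq_fintype_card]
    show Nat.card ↥({1, τ, lam, τ * lam} : Set (F ≃ₐ[K] F)) = 4
    rw [Nat.card_coe_set_eq]
    rw [Set.ncard_insert_of_notMem (by
        simp only [Set.mem_insert_iff, Set.mem_singleton_iff]
        push_neg
        exact ⟨Ne.symm h1τ, Ne.symm h1l, Ne.symm h1μ⟩) (Set.toFinite _),
      Set.ncard_insert_of_notMem (by
        simp only [Set.mem_insert_iff, Set.mem_singleton_iff]
        push_neg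
        exact ⟨hτl, hτμ⟩) (Set.toFinite _),
      Set.ncard_insert_of_notMem (by simp only [Set.mem_singleton_iff]; exact hlμ)
        (Set.toFinite _), Set.ncard_singleton]
  have hfaith : FaithfulSMul H F := ⟨fun {g1 g2} h => Subtype.ext (AlgEquiv.ext fun f => h f)⟩
  have hrank : finrank ↥(fixedField H) F = 4 := by
    rw [show (4 : ℕ) = Fintype.card H from hcard.symm]
    exact FixedPoints.finrank_eq_card H F
  rw [hclos]
  -- the adjoined field
  set E : IntermediateField K F := adjoin K {x + y + z + w,
      (x + y - z - w) / (x * y - z * w),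
      (x - y - z + w) / (x * w - y * z),
      (x - y + z - w) / (x * z - y * w)} with hE
  -- membership of generators
  have hsE : x + y + z + w ∈ E := subset_adjoin K _ (by simp)
  have haE : (x + y - z - w) / (x * y - z * w) ∈ E := subset_adjoin K _ (by
    simp only [Set.mem_insert_iff]; tauto)
  have hbE : (x - y - z + w) / (x * w - y * z) ∈ E := subset_adjoin K _ (by
    simp only [Set.mem_insert_iff]; tauto)
  have hcE : (x - y + z - w) / (x * z - y * w) ∈ E := subset_adjoin K _ (by
    simp only [Set.mem_insert_iff, Set.mem_singleton_iff]; tauto)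
  have ha0 : (x + y - z - w) / (x * y - z * w) ≠ 0 := div_ne_zero hp0 hA0
  -- the two quadratic coefficients
  have hc1E : (x+y+z+w) * (((x-y-z+w)/(x*w-y*z))⁻¹ + ((x-y+z-w)/(x*z-y*w))⁻¹)
      - 4 * (((x-y-z+w)/(x*w-y*z))⁻¹ * ((x-y+z-w)/(x*z-y*w))⁻¹) ∈ E := by
    have h4 : (4 : F) ∈ E := by
      rw [show (4 : F) = 1+1+1+1 by norm_num]
      exact E.add_mem (E.add_mem (E.add_mem E.one_mem E.one_mem) E.one_mem) E.one_mem
    exact E.sub_mem (E.mul_mem hsE (E.add_mem (E.inv_mem hbE) (E.inv_mem hcE)))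
      (E.mul_mem h4 (E.mul_mem (E.inv_mem hbE) (E.inv_mem hcE)))
  have hc2E : (x+y+z+w) * (((x+y-z-w)/(x*y-z*w))⁻¹ + ((x-y-z+w)/(x*w-y*z))⁻¹)
      - 4 * (((x+y-z-w)/(x*y-z*w))⁻¹ * ((x-y-z+w)/(x*w-y*z))⁻¹) ∈ E := by
    have h4 : (4 : F) ∈ E := by
      rw [show (4 : F) = 1+1+1+1 by norm_num]
      exact E.add_mem (E.add_mem (E.add_mem E.one_mem E.one_mem) E.one_mem) E.one_mem
    exact E.sub_mem (E.mul_mem hsE (E.add_mem (E.inv_mem haE) (E.inv_mem hbE)))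
      (E.mul_mem h4 (E.mul_mem (E.inv_mem haE) (E.inv_mem hbE)))
  -- the quadratic identities
  have id1 : (x+y) * (x+y) -
      ((⟨x+y+z+w, hsE⟩ : ↥E) : F) * (x+y) + ((⟨_, hc1E⟩ : ↥E) : F) = 0 := by
    show (x+y) * (x+y) - (x+y+z+w) * (x+y) +
      ((x+y+z+w) * (((x-y-z+w)/(x*w-y*z))⁻¹ + ((x-y+z-w)/(x*z-y*w))⁻¹)
        - 4 * (((x-y-z+w)/(x*w-y*z))⁻¹ * ((x-y+z-w)/(x*z-y*w))⁻¹)) = 0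
    rw [inv_div, inv_div]
    field_simp
    ring
  have id2 : (x+z) * (x+z) -
      ((⟨x+y+z+w, hsE⟩ : ↥E) : F) * (x+z) + ((⟨_, hc2E⟩ : ↥E) : F) = 0 := by
    show (x+z) * (x+z) - (x+y+z+w) * (x+z) +
      ((x+y+z+w) * (((x+y-z-w)/(x*y-z*w))⁻¹ + ((x-y-z+w)/(x*w-y*z))⁻¹)
        - 4 * (((x+y-z-w)/(x*y-z*w))⁻¹ * ((x-y-z+w)/(x*w-y*z))⁻¹)) = 0
    rw [inv_div, inv_div]
    field_simp
    ring
  -- generation: F = E(x+y)(x+z)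
  have htop : ∀ f : F, f ∈ IntermediateField.adjoin
      (↥(IntermediateField.adjoin ↥E {x+y})) {x+z} := by
    set E1 : IntermediateField ↥E F := IntermediateField.adjoin ↥E {x+y} with hE1
    set T : IntermediateField ↥E1 F := IntermediateField.adjoin ↥E1 {x+z} with hT
    have hE_E1 : ∀ t : F, t ∈ E → t ∈ E1 := fun t ht => E1.algebraMap_mem ⟨t, ht⟩
    have hE1_T : ∀ t : F, t ∈ E1 → t ∈ T := fun t ht => T.algebraMap_mem ⟨t, ht⟩
    have hE_T : ∀ t : F, t ∈ E → t ∈ T := fun t ht => hE1_T t (hE_E1 t ht)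
    have hmT : x + y ∈ T := hE1_T _ (subset_adjoin ↥E _ rfl)
    have hnT : x + z ∈ T := subset_adjoin ↥E1 _ rfl
    have hsT : x + y + z + w ∈ T := hE_T _ hsE
    have haT : (x + y - z - w) / (x * y - z * w) ∈ T := hE_T _ haE
    have hxT : x ∈ T := by
      have h1 : (x+z)+(x+z)-(x+y+z+w) ≠ 0 := by
        rw [show (x+z)+(x+z)-(x+y+z+w) = x-y+z-w from by ring]; exact hr0
      have hxid : x = ((x+z)*((x+y)+(x+z)-(x+y+z+w)) -
          ((x+y)+(x+y)-(x+y+z+w))/((x+y-z-w)/(x*y-z*w)))/((x+z)+(x+z)-(x+y+z+w)) := by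
        rw [eq_div_iff h1, div_div_eq_mul_div]
        field_simp
        ring
      rw [hxid]
      exact T.div_mem (T.sub_mem (T.mul_mem hnT (T.sub_mem (T.add_mem hmT hnT) hsT))
        (T.div_mem (T.sub_mem (T.add_mem hmT hmT) hsT) haT))
        (T.sub_mem (T.add_mem hnT hnT) hsT)
    have hyT : y ∈ T := by
      rw [show y = (x+y) - x from by ring]
      exact T.sub_mem hmT hxT
    have hzT : z ∈ T := by
      rw [show z = (x+z) - x from by ring]
      exact T.sub_mem hnT hxT
    have hwT : w ∈ T := by
      rw [show w = (x+y+z+w) - (x+y) - z from by ring]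
      exact T.sub_mem (T.sub_mem hsT hmT) hzT
    intro f
    have : f ∈ T.toSubfield := by
      apply fixed_field_V4_gen (K := K) T.toSubfield
      · intro k
        have hkE : algebraMap K F k ∈ E := E.algebraMap_mem k
        exact hE_T _ hkE
      · intro i
        have hfin4 : ∀ j : Fin 4, j = 0 ∨ j = 1 ∨ j = 2 ∨ j = 3 := by decide
        rcases hfin4 i with rfl|rfl|rfl|rfl
        · rw [← hx]; exact hxT
        · rw [← hy]; exact hyT
        · rw [← hz]; exact hzT
        · rw [← hw]; exact hwT
    exact this
  obtain ⟨hfd, hrk⟩ := fixed_field_V4_rank E (x+y) (x+z) ⟨x+y+z+w, hsE⟩ ⟨_, hc1E⟩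
    ⟨x+y+z+w, hsE⟩ ⟨_, hc2E⟩ id1 id2 htop
  -- the easy inclusion : E ≤ fixedField H
  have hle : E ≤ fixedField H := by
    rw [hE]
    apply adjoin_le_iff.2
    intro g hg
    have hfix : ∀ σ : ↥H, σ • g = g := by
      rintro ⟨σ, hσ⟩
      show σ g = g
      rcases (hmemH σ).1 hσ with heq|heq|heq|heq <;> rw [heq]
      · exact AlgEquiv.one_apply g
      · show τ g = g
        rcases hg with rfl|rfl|rfl|rfl
        · rw [map_add, map_add, map_add, hτx, hτy, hτz, hτw]; ring
        · rw [map_div₀, map_sub, map_sub, map_add, map_sub, map_mul, map_mul,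
            hτx, hτy, hτz, hτw, show y+x-w-z = x+y-z-w from by ring,
            show y*x-w*z = x*y-z*w from by ring]
        · rw [map_div₀, map_add, map_sub, map_sub, map_sub, map_mul, map_mul,
            hτx, hτy, hτz, hτw, show y-x-w+z = -(x-y-z+w) from by ring,
            show y*z-x*w = -(x*w-y*z) from by ring, neg_div_neg_eq]
        · rw [map_div₀, map_sub, map_add, map_sub, map_sub, map_mul, map_mul,
            hτx, hτy, hτz, hτw, show y-x+w-z = -(x-y+z-w) from by ring,
            show y*w-x*z = -(x*z-y*w) from by ring, neg_div_neg_eq]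
      · show lam g = g
        rcases hg with rfl|rfl|rfl|rfl
        · rw [map_add, map_add, map_add, hlx, hly, hlz, hlw]; ring
        · rw [map_div₀, map_sub, map_sub, map_add, map_sub, map_mul, map_mul,
            hlx, hly, hlz, hlw, show z+w-x-y = -(x+y-z-w) from by ring,
            show z*w-x*y = -(x*y-z*w) from by ring, neg_div_neg_eq]
        · rw [map_div₀, map_add, map_sub, map_sub, map_sub, map_mul, map_mul,
            hlx, hly, hlz, hlw, show z-w-x+y = -(x-y-z+w) from by ring,
            show z*y-w*x = -(x*w-y*z) from by ring, neg_div_neg_eq]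
        · rw [map_div₀, map_sub, map_add, map_sub, map_sub, map_mul, map_mul,
            hlx, hly, hlz, hlw, show z-w+x-y = x-y+z-w from by ring,
            show z*x-w*y = x*z-y*w from by ring]
      · show (τ * lam) g = g
        rcases hg with rfl|rfl|rfl|rfl
        · rw [map_add, map_add, map_add, hμx, hμy, hμz, hμw]; ring
        · rw [map_div₀, map_sub, map_sub, map_add, map_sub, map_mul, map_mul,
            hμx, hμy, hμz, hμw, show w+z-y-x = -(x+y-z-w) from by ring,
            show w*z-y*x = -(x*y-z*w) from by ring, neg_div_neg_eq]
        · rw [map_div₀, map_add, map_sub, map_sub, map_sub, map_mul, map_mul,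
            hμx, hμy, hμz, hμw, show w-z-y+x = x-y-z+w from by ring,
            show w*x-z*y = x*w-y*z from by ring]
        · rw [map_div₀, map_sub, map_add, map_sub, map_sub, map_mul, map_mul,
            hμx, hμy, hμz, hμw, show w-z+y-x = -(x-y+z-w) from by ring,
            show w*y-z*x = -(x*z-y*w) from by ring, neg_div_neg_eq]
    exact hfix
  -- conclude by rank comparison
  refine (IntermediateField.eq_of_le_of_finrank_le' hle ?_).symm
  rw [hrank]
  exact hrk
end

section
/- Let K be a field of characteristic not 2, a ∈ K^×, and let σ be the K-automorphism of K(x,y,z) defined by σ(x) = a/x, σ(y) = a/y, σ(z) = a/z. Then the fixed field K(x,y,z)^⟨σ⟩ equals K(k₁, k₂, k₃), where k₁ = (xy + a)/(x + y), k₂ = (yz + a)/(y + z), k₃ = (xz + a)/(x + z). In particular K(x,y,z)^⟨σ⟩ is rational over K. -/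
/-!
Each `kᵢ` is visibly `σ`-invariant, so `L = K(k₁, k₂, k₃)` lies in the fixed field, which is
proper because `σ x = a / x ≠ x`. Conversely `x + a / x` is a rational function of `k₁, k₂, k₃`
(the identity needs `2 ≠ 0`), so `x` is a root of `T² - (x + a / x) T + a` over `L`, and
`y = (a - k₁ x) / (k₁ - x)`, `z = (a - k₃ x) / (k₃ - x)` lie in `L(x)`. Hence `[K(x,y,z) : L] ≤ 2`,
which leaves no room for an intermediate field strictly between `L` and the proper fixed field.
-/

open MvPolynomial IntermediateField

def pairInvariant {F : Type*} [Field F] (A u v : F) : F := (u * v + A) / (u + v)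

section PairInvariant

variable {F : Type*} [Field F] {A x y z : F}

theorem map_pairInvariant {G : Type*} [FunLike G F F] [RingHomClass G F F] (σ : G)
    (hA : A ≠ 0) (hx : x ≠ 0) (hy : y ≠ 0) (hxy : x + y ≠ 0)
    (hσA : σ A = A) (hσx : σ x = A / x) (hσy : σ y = A / y) :
    σ (pairInvariant A x y) = pairInvariant A x y := by
  have hden : A / x + A / y = A * (x + y) / (x * y) := by field_simp; ring
  rw [pairInvariant, map_div₀, map_add, map_add, map_mul, hσx, hσy, hσA, hden,
    div_eq_div_iff (div_ne_zero (mul_ne_zero hA hxy) (mul_ne_zero hx hy)) hxy]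
  field_simp
  ring

section Membership

variable {S : Type*} [SetLike S F] [SubfieldClass S F] {L : S}

theorem mem_of_pairInvariant_mem (hxy : x + y ≠ 0) (hx2 : x ^ 2 ≠ A) (hA : A ∈ L) (hx : x ∈ L)
    (hk : pairInvariant A x y ∈ L) : y ∈ L := by
  have hsub : pairInvariant A x y - x = (A - x ^ 2) / (x + y) := by
    unfold pairInvariant; field_simp; ring
  have hy : y = (A - pairInvariant A x y * x) / (pairInvariant A x y - x) := by
    rw [hsub, eq_div_iff (div_ne_zero (sub_ne_zero.2 hx2.symm) hxy), pairInvariant]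
    field_simp
    ring
  rw [hy]
  exact div_mem (sub_mem hA (mul_mem hk hx)) (sub_mem hk hx)

theorem add_div_self_mem_of_pairInvariant_mem (h2 : (2 : F) ≠ 0) (hx : x ≠ 0)
    (hxy : x + y ≠ 0) (hyz : y + z ≠ 0) (hxz : x + z ≠ 0) (hy2 : y ^ 2 ≠ A) (hz2 : z ^ 2 ≠ A)
    (hA : A ∈ L) (h₁ : pairInvariant A x y ∈ L) (h₂ : pairInvariant A y z ∈ L)
    (h₃ : pairInvariant A x z ∈ L) :
    x + A / x ∈ L := by
  set k₁ := pairInvariant A x y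
  set k₂ := pairInvariant A y z
  set k₃ := pairInvariant A x z
  have hD : (x + y) * (y + z) * (x + z) ≠ 0 := mul_ne_zero (mul_ne_zero hxy hyz) hxz
  have hden : k₂ * (k₁ + k₃) - k₁ * k₃ - A =
      2 * x * (y ^ 2 - A) * (z ^ 2 - A) / ((x + y) * (y + z) * (x + z)) := by
    simp only [k₁, k₂, k₃, pairInvariant]; field_simp; ring
  have hnum : 2 * (k₂ * (A + k₁ * k₃) - A * (k₁ + k₃)) =
      2 * (x ^ 2 + A) * (y ^ 2 - A) * (z ^ 2 - A) / ((x + y) * (y + z) * (x + z)) := by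
    simp only [k₁, k₂, k₃, pairInvariant]; field_simp; ring
  have hden0 : k₂ * (k₁ + k₃) - k₁ * k₃ - A ≠ 0 := by
    rw [hden]
    exact div_ne_zero (mul_ne_zero (mul_ne_zero (mul_ne_zero h2 hx) (sub_ne_zero.2 hy2))
      (sub_ne_zero.2 hz2)) hD
  have hformula : x + A / x =
      2 * (k₂ * (A + k₁ * k₃) - A * (k₁ + k₃)) / (k₂ * (k₁ + k₃) - k₁ * k₃ - A) := by
    rw [eq_div_iff hden0, hden, hnum]; field_simp
  rw [hformula]
  exact div_mem (mul_mem (ofNat_mem L 2) (sub_mem (mul_mem h₂ (add_mem hA (mul_mem h₁ h₃)))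
    (mul_mem hA (add_mem h₁ h₃)))) (sub_mem (sub_mem (mul_mem h₂ (add_mem h₁ h₃))
      (mul_mem h₁ h₃)) hA)

end Membership

end PairInvariant

namespace IntermediateField

variable {K E : Type*} [Field K] [Field E] [Algebra K E]

theorem mem_fixedField_zpowers_iff {σ : E ≃ₐ[K] E} {w : E} :
    w ∈ fixedField (Subgroup.zpowers σ) ↔ σ w = w := by
  rw [mem_fixedField_iff, Subgroup.forall_mem_zpowers]
  exact MulAction.mem_fixedBy_zpowers_iff_mem_fixedBy (α := E) (g := σ)

theorem pairInvariant_mem_fixedField_zpowers {σ : E ≃ₐ[K] E} {a : K} {x y : E}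
    (ha : algebraMap K E a ≠ 0) (hx : x ≠ 0) (hy : y ≠ 0) (hxy : x + y ≠ 0)
    (hσx : σ x = algebraMap K E a / x) (hσy : σ y = algebraMap K E a / y) :
    pairInvariant (algebraMap K E a) x y ∈ fixedField (Subgroup.zpowers σ) :=
  mem_fixedField_zpowers_iff.2 (map_pairInvariant σ ha hx hy hxy (σ.commutes a) hσx hσy)

theorem eq_of_le_of_finrank_le_two {S T : IntermediateField K E} [FiniteDimensional S E]
    (hST : S ≤ T) (hT : T ≠ ⊤) (hS : Module.finrank S E ≤ 2) : S = T := by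
  refine eq_of_le_of_finrank_eq' hST ?_
  have hdvd : Module.finrank T E ∣ Module.finrank S E := finrank_dvd_of_le_left hST
  have hpos : 0 < Module.finrank S E := Module.finrank_pos
  have hT1 : Module.finrank T E ≠ 1 := mt finrank_eq_one_iff_eq_top.1 hT
  interval_cases Module.finrank S E
  · exact absurd (Nat.dvd_one.1 hdvd) hT1
  · exact ((Nat.dvd_prime Nat.prime_two).1 hdvd).resolve_left hT1 |>.symm

theorem finrank_le_two_of_adjoin_eq_top {L : Type*} [Field L] [Algebra L E] {x : E}
    (htop : L⟮x⟯ = ⊤) {t c : L} (hx : x ^ 2 - algebraMap L E t * x + algebraMap L E c = 0) :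
    FiniteDimensional L E ∧ Module.finrank L E ≤ 2 := by
  set p : Polynomial L := .X ^ 2 - .C t * .X + .C c
  have hp : p.Monic := by simp only [p]; monicity!
  have hpx : Polynomial.aeval x p = 0 := by simpa [p] using hx
  have hint : IsIntegral L x := ⟨p, hp, hpx⟩
  have hfin := adjoin.finiteDimensional hint
  have hrank := adjoin.finrank hint
  rw [htop, finrank_top'] at hrank
  rw [htop] at hfin
  refine ⟨topEquiv.toLinearEquiv.finiteDimensional, hrank ▸ ?_⟩
  exact (Polynomial.natDegree_le_natDegree (minpoly.min L x hp hpx)).trans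
    (by simp only [p]; compute_degree)

theorem fixedField_zpowers_eq_adjoin_pairInvariant (σ : E ≃ₐ[K] E) {a : K} {x y z : E}
    (h2 : (2 : E) ≠ 0) (ha : algebraMap K E a ≠ 0) (hx : x ≠ 0) (hy : y ≠ 0) (hz : z ≠ 0)
    (hxy : x + y ≠ 0) (hyz : y + z ≠ 0) (hxz : x + z ≠ 0) (hx2 : x ^ 2 ≠ algebraMap K E a)
    (hy2 : y ^ 2 ≠ algebraMap K E a) (hz2 : z ^ 2 ≠ algebraMap K E a)
    (hgen : adjoin K {x, y, z} = ⊤) (hσx : σ x = algebraMap K E a / x)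
    (hσy : σ y = algebraMap K E a / y) (hσz : σ z = algebraMap K E a / z) :
    fixedField (Subgroup.zpowers σ) = adjoin K {pairInvariant (algebraMap K E a) x y,
      pairInvariant (algebraMap K E a) y z, pairInvariant (algebraMap K E a) x z} := by
  set A := algebraMap K E a
  set L := adjoin K {pairInvariant A x y, pairInvariant A y z, pairInvariant A x z}
  have hk : {pairInvariant A x y, pairInvariant A y z, pairInvariant A x z} ⊆ (L : Set E) :=
    subset_adjoin K _
  have hAL : A ∈ L := L.algebraMap_mem a
  have hle : L ≤ fixedField (Subgroup.zpowers σ) := by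
    simp only [L, adjoin_le_iff, Set.insert_subset_iff, Set.singleton_subset_iff, SetLike.mem_coe]
    exact ⟨pairInvariant_mem_fixedField_zpowers ha hx hy hxy hσx hσy,
      pairInvariant_mem_fixedField_zpowers ha hy hz hyz hσy hσz,
      pairInvariant_mem_fixedField_zpowers ha hx hz hxz hσx hσz⟩
  have hx_fix : x ∉ fixedField (Subgroup.zpowers σ) := by
    rw [mem_fixedField_zpowers_iff, hσx, div_eq_iff hx]
    exact fun h => hx2 (by rw [sq, h])
  have htop : adjoin L {x} = ⊤ := by
    apply restrictScalars_injective K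
    rw [restrictScalars_top, restrictScalars_adjoin, eq_top_iff, ← hgen, adjoin_le_iff]
    have hL : (L : Set E) ⊆ adjoin K (L ∪ {x}) := fun w hw => subset_adjoin K _ (Or.inl hw)
    have hxL : x ∈ adjoin K (L ∪ {x} : Set E) := subset_adjoin K _ (Or.inr rfl)
    simp only [Set.insert_subset_iff, Set.singleton_subset_iff, SetLike.mem_coe]
    exact ⟨hxL, mem_of_pairInvariant_mem hxy hx2 (hL hAL) hxL (hL (hk (by simp))),
      mem_of_pairInvariant_mem hxz hx2 (hL hAL) hxL (hL (hk (by simp)))⟩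
  have ht : x + A / x ∈ L := add_div_self_mem_of_pairInvariant_mem h2 hx hxy hyz hxz hy2 hz2
    hAL (hk (by simp)) (hk (by simp)) (hk (by simp))
  obtain ⟨_, hrank⟩ := finrank_le_two_of_adjoin_eq_top htop (t := ⟨_, ht⟩) (c := ⟨A, hAL⟩)
    (by simp only [IntermediateField.algebraMap_apply]; field_simp; ring)
  exact (eq_of_le_of_finrank_le_two hle (fun h => hx_fix (h ▸ mem_top)) hrank).symm

end IntermediateField

namespace IsFractionRing

variable {ι K F : Type*} [Field K] [Field F] [Algebra (MvPolynomial ι K) F]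
  [IsFractionRing (MvPolynomial ι K) F]

theorem algebraMap_ne_zero_of_eval_ne_zero {p : MvPolynomial ι K} (v : ι → K)
    (h : eval v p ≠ 0) : algebraMap (MvPolynomial ι K) F p ≠ 0 :=
  (map_ne_zero_iff _ (IsFractionRing.injective _ F)).2 fun hp => h (by rw [hp, map_zero])

theorem algebraMap_X_ne_zero (i : ι) : algebraMap (MvPolynomial ι K) F (X i) ≠ 0 :=
  algebraMap_ne_zero_of_eval_ne_zero (fun _ => 1) (by simp)

theorem algebraMap_X_add_X_ne_zero {i j : ι} (hij : i ≠ j) :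
    algebraMap (MvPolynomial ι K) F (X i) + algebraMap (MvPolynomial ι K) F (X j) ≠ 0 := by
  classical
  rw [← map_add]
  exact algebraMap_ne_zero_of_eval_ne_zero (Pi.single i 1) (by simp [hij.symm])

variable [Algebra K F] [IsScalarTower K (MvPolynomial ι K) F]

theorem algebraMap_X_sq_ne {a : K} (ha : a ≠ 0) (i : ι) :
    algebraMap (MvPolynomial ι K) F (X i) ^ 2 ≠ algebraMap K F a := by
  rw [← sub_ne_zero, IsScalarTower.algebraMap_apply K (MvPolynomial ι K) F, ← map_pow, ← map_sub]
  exact algebraMap_ne_zero_of_eval_ne_zero 0 (by simpa using ha)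

theorem eq_top_of_algebraMap_X_mem {T : IntermediateField K F}
    (hT : ∀ i, algebraMap (MvPolynomial ι K) F (X i) ∈ T) : T = ⊤ := by
  have hpoly (p : MvPolynomial ι K) : algebraMap (MvPolynomial ι K) F p ∈ T := by
    induction p using MvPolynomial.induction_on with
    | C k => exact (IsScalarTower.algebraMap_apply K (MvPolynomial ι K) F k) ▸ T.algebraMap_mem k
    | add p q hp hq => rw [map_add]; exact add_mem hp hq
    | mul_X p i hp => rw [map_mul]; exact mul_mem hp (hT i)
  refine eq_top_iff.2 fun w _ => ?_
  obtain ⟨p, q, -, rfl⟩ := IsFractionRing.div_surjective (A := MvPolynomial ι K) w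
  exact div_mem (hpoly p) (hpoly q)

end IsFractionRing

theorem fixed_field_neg_I3 (K F : Type*) [Field K] [Field F]
    [Algebra K F] [Algebra (MvPolynomial (Fin 3) K) F]
    [IsScalarTower K (MvPolynomial (Fin 3) K) F]
    [IsFractionRing (MvPolynomial (Fin 3) K) F]
    (h2 : (2 : K) ≠ 0) (a : K) (ha : a ≠ 0)
    (x y z : F)
    (hx : x = algebraMap (MvPolynomial (Fin 3) K) F (X 0))
    (hy : y = algebraMap (MvPolynomial (Fin 3) K) F (X 1))
    (hz : z = algebraMap (MvPolynomial (Fin 3) K) F (X 2))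
    (σ : F ≃ₐ[K] F)
    (hσx : σ x = algebraMap K F a / x)
    (hσy : σ y = algebraMap K F a / y)
    (hσz : σ z = algebraMap K F a / z) :
    fixedField (Subgroup.zpowers σ) =
      adjoin K {(x * y + algebraMap K F a) / (x + y),
                (y * z + algebraMap K F a) / (y + z),
                (x * z + algebraMap K F a) / (x + z)} := by
  have hgen : adjoin K {x, y, z} = ⊤ := by
    refine IsFractionRing.eq_top_of_algebraMap_X_mem (ι := Fin 3) fun i => ?_
    fin_cases i
    exacts [hx ▸ subset_adjoin K _ (by simp), hy ▸ subset_adjoin K _ (by simp),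
      hz ▸ subset_adjoin K _ (by simp)]
  refine fixedField_zpowers_eq_adjoin_pairInvariant σ ?_ ((map_ne_zero _).2 ha)
    (hx ▸ IsFractionRing.algebraMap_X_ne_zero 0) (hy ▸ IsFractionRing.algebraMap_X_ne_zero 1)
    (hz ▸ IsFractionRing.algebraMap_X_ne_zero 2)
    (hx ▸ hy ▸ IsFractionRing.algebraMap_X_add_X_ne_zero (by decide))
    (hy ▸ hz ▸ IsFractionRing.algebraMap_X_add_X_ne_zero (by decide))
    (hx ▸ hz ▸ IsFractionRing.algebraMap_X_add_X_ne_zero (by decide))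
    (hx ▸ IsFractionRing.algebraMap_X_sq_ne ha 0) (hy ▸ IsFractionRing.algebraMap_X_sq_ne ha 1)
    (hz ▸ IsFractionRing.algebraMap_X_sq_ne ha 2) hgen hσx hσy hσz
  rw [← map_ofNat (algebraMap K F) 2]
  exact (map_ne_zero _).2 h2
end

section
/- Let K be a field of characteristic not 2, a ∈ K^×, and let τ, λ be the K-automorphisms of K(x,y,z) with τ: x ↦ a/x, y ↦ a/y, z ↦ z, and λ: x ↦ a/x, y ↦ y, z ↦ a/z. Then K(x,y,z)^⟨τ,λ⟩ = K(v₁, v₂, v₃), where v₁ = (a(−x+y+z) − xyz)/(a − xy − xz + yz), v₂ = (a(x−y+z) − xyz)/(a − xy + xz − yz), and v₃ = (a(x+y−z) − xyz)/(a + xy − xz − yz). In particular this fixed field is rational over K. -/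
/-!
The element `v₁` is `kleinInvariant a x y z`, and `v₂`, `v₃` are the same function at permutations
of `(x, y, z)`. It is unchanged when any two of its arguments `t` are replaced by `a / t`, so all
three lie in the fixed field of `G = ⟨τ, λ⟩ ≅ C₂ × C₂`. Conversely, over `E = K(v₁, v₂, v₃)` the
variable `x` is a root of a quadratic with leading coefficient `v₂ + v₃ ≠ 0` (this is where
`char K ≠ 2` enters), `y` is a root of a quadratic over `E(x)`, and `z` is a rational function of
`v₁, x, y`. Hence `[F : E] ≤ 4 = |G| = [F : F^G]` by Artin's theorem, and `E ⊆ F^G` is an equality.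
-/

open IntermediateField

namespace Subgroup

variable {G : Type*} [Group G] {s t : G}

theorem coe_closure_pair_of_involutive (hs : s * s = 1) (ht : t * t = 1) (hst : s * t = t * s) :
    (closure {s, t} : Set G) = {1, s, t, s * t} := by
  have hss : ∀ g, s * (s * g) = g := fun g => by rw [← mul_assoc, hs, one_mul]
  have hts : ∀ g, t * (s * g) = s * (t * g) := fun g => by rw [← mul_assoc, ← hst, mul_assoc]
  let H : Subgroup G :=
    { carrier := {1, s, t, s * t}
      one_mem' := by simp
      mul_mem' := by
        rintro p q hp hq
        simp only [Set.mem_insert_iff, Set.mem_singleton_iff] at hp hq ⊢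
        rcases hp with rfl | rfl | rfl | rfl <;> rcases hq with rfl | rfl | rfl | rfl <;>
          simp [mul_assoc, hs, ht, hss, hts, hst.symm]
      inv_mem' := by
        rintro p hp
        have hpp : p * p = 1 := by
          simp only [Set.mem_insert_iff, Set.mem_singleton_iff] at hp
          rcases hp with rfl | rfl | rfl | rfl
          · exact one_mul 1
          · exact hs
          · exact ht
          · rw [mul_assoc, hts, hss, ht]
        rwa [inv_eq_of_mul_eq_one_right hpp] }
  have hs_mem : s ∈ closure {s, t} := subset_closure (by simp)
  have ht_mem : t ∈ closure {s, t} := subset_closure (by simp)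
  refine subset_antisymm (closure_le H |>.2 ?_) ?_
  · simp [Set.insert_subset_iff, H]
  · simp [Set.insert_subset_iff, one_mem, hs_mem, ht_mem, mul_mem hs_mem ht_mem]

theorem card_closure_pair_of_involutive (hs : s * s = 1) (ht : t * t = 1) (hst : s * t = t * s)
    (hs1 : s ≠ 1) (ht1 : t ≠ 1) (hne : s ≠ t) : Nat.card (closure {s, t}) = 4 := by
  have hst1 : s * t ≠ 1 := fun h =>
    hne ((inv_eq_of_mul_eq_one_right hs).symm.trans (inv_eq_of_mul_eq_one_right h))
  rw [← SetLike.coe_sort_coe, coe_closure_pair_of_involutive hs ht hst, Nat.card_coe_set_eq,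
    Set.ncard_insert_of_notMem, Set.ncard_insert_of_notMem, Set.ncard_pair]
  all_goals simp_all [eq_comm]

end Subgroup

section FixedField

variable {K F : Type*} [Field K] [Field F] [Algebra K F]

theorem mem_fixedField_closure_iff {S : Set (F ≃ₐ[K] F)} {v : F} :
    v ∈ fixedField (Subgroup.closure S) ↔ ∀ σ ∈ S, σ v = v :=
  ⟨fun h σ hσ => h ⟨σ, Subgroup.subset_closure hσ⟩,
    fun h σ => (Subgroup.closure_le (MulAction.stabilizer (F ≃ₐ[K] F) v)).2 h σ.2⟩

theorem fixedField_eq_of_le_of_finrank_le {H : Subgroup (F ≃ₐ[K] F)} {E : IntermediateField K F}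
    [FiniteDimensional E F] (hle : E ≤ fixedField H) (hH : Module.finrank E F ≤ Nat.card H) :
    fixedField H = E := by
  have : Finite H := Nat.finite_of_card_ne_zero (Module.finrank_pos.trans_le hH).ne'
  have : Fintype H := Fintype.ofFinite H
  have hfix : Module.finrank (fixedField H) F = Nat.card H := by
    rw [Nat.card_eq_fintype_card]; exact FixedPoints.finrank_eq_card H F
  exact (eq_of_le_of_finrank_le' hle (hfix ▸ hH)).symm

end FixedField

section Degree

open Polynomial

theorem finrank_adjoin_simple_le_natDegree {E F : Type*} [Field E] [Field F] [Algebra E F]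
    {x : F} {p : E[X]} (hp : p ≠ 0) (hpx : aeval x p = 0) :
    Module.finrank E E⟮x⟯ ≤ p.natDegree := by
  rw [adjoin.finrank (IsAlgebraic.isIntegral ⟨p, hp, hpx⟩)]
  exact natDegree_le_natDegree (minpoly.degree_le_of_ne_zero E x hp hpx)

theorem finiteDimensional_and_finrank_le_of_adjoin_pair_eq_top {E F : Type*} [Field E] [Field F]
    [Algebra E F] {x y : F} {p q : E[X]} (hp : p ≠ 0) (hq : q ≠ 0) (hpx : aeval x p = 0)
    (hqy : aeval y q = 0) (htop : E⟮x, y⟯ = ⊤) :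
    FiniteDimensional E F ∧ Module.finrank E F ≤ p.natDegree * q.natDegree := by
  set L := E⟮x⟯
  have hq' : aeval y (q.map (algebraMap E L)) = 0 := by
    rwa [Polynomial.aeval_map_algebraMap]
  have hLy : L⟮y⟯ = ⊤ := restrictScalars_injective E <| by
    rw [adjoin_simple_adjoin_simple, htop, restrictScalars_top]
  have hEL : FiniteDimensional E L :=
    adjoin.finiteDimensional (IsAlgebraic.isIntegral ⟨p, hp, hpx⟩)
  have hLF : FiniteDimensional L F := by
    have := adjoin.finiteDimensional (IsAlgebraic.isIntegral ⟨_, map_ne_zero hq, hq'⟩)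
    rw [hLy] at this
    exact topEquiv.toLinearEquiv.finiteDimensional
  refine ⟨FiniteDimensional.trans E L F, ?_⟩
  calc Module.finrank E F = Module.finrank E L * Module.finrank L L⟮y⟯ := by
        rw [hLy, finrank_top', Module.finrank_mul_finrank]
    _ ≤ p.natDegree * (q.map (algebraMap E L)).natDegree :=
        Nat.mul_le_mul (finrank_adjoin_simple_le_natDegree hp hpx)
          (finrank_adjoin_simple_le_natDegree (map_ne_zero hq) hq')
    _ = p.natDegree * q.natDegree := by rw [natDegree_map]

theorem exists_aeval_eq_zero_natDegree_le_two {K F : Type*} [Field K] [Field F] [Algebra K F]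
    {E : IntermediateField K F} {b c d x : F} (hb : b ∈ E) (hc : c ∈ E) (hd : d ∈ E)
    (hb0 : b ≠ 0) (h : b * x ^ 2 + c * x + d = 0) :
    ∃ p : E[X], p ≠ 0 ∧ p.natDegree ≤ 2 ∧ aeval x p = 0 := by
  set p : E[X] := C ⟨b, hb⟩ * X ^ 2 + C ⟨c, hc⟩ * X + C ⟨d, hd⟩
  have hp : p.coeff 2 = ⟨b, hb⟩ := by simp [p]
  refine ⟨p, fun h0 => hb0 ?_, natDegree_quadratic_le, ?_⟩
  · simpa [h0] using (congrArg Subtype.val hp).symm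
  · simpa [p] using h

end Degree

section KleinInvariant

variable {F : Type*} [Field F] {A x y z : F}

def kleinInvariant (A x y z : F) : F :=
  (A * (-x + y + z) - x * y * z) / (A - x * y - x * z + y * z)

theorem kleinInvariant_comm (A x y z : F) : kleinInvariant A x z y = kleinInvariant A x y z := by
  unfold kleinInvariant; ring

theorem map_kleinInvariant {G F' : Type*} [Field F'] [FunLike G F F'] [RingHomClass G F F']
    (f : G) (A x y z : F) :
    f (kleinInvariant A x y z) = kleinInvariant (f A) (f x) (f y) (f z) := by
  simp only [kleinInvariant, map_div₀, map_sub, map_add, map_mul, map_neg]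

theorem kleinInvariant_div_div_left (hA : A ≠ 0) (hx : x ≠ 0) (hy : y ≠ 0) :
    kleinInvariant A (A / x) (A / y) z = kleinInvariant A x y z := by
  have hc : -A / (x * y) ≠ 0 := by simp [hA, hx, hy]
  unfold kleinInvariant
  conv_rhs => rw [← mul_div_mul_left _ _ hc]
  congr 1 <;> field_simp <;> ring

theorem kleinInvariant_div_div_right (hA : A ≠ 0) (hy : y ≠ 0) (hz : z ≠ 0) :
    kleinInvariant A x (A / y) (A / z) = kleinInvariant A x y z := by
  have hc : A / (y * z) ≠ 0 := by simp [hA, hy, hz]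
  unfold kleinInvariant
  conv_rhs => rw [← mul_div_mul_left _ _ hc]
  congr 1 <;> field_simp <;> ring

theorem kleinInvariant_div_div_outer (hA : A ≠ 0) (hx : x ≠ 0) (hz : z ≠ 0) :
    kleinInvariant A (A / x) y (A / z) = kleinInvariant A x y z := by
  rw [← kleinInvariant_comm, kleinInvariant_div_div_left hA hx hz, kleinInvariant_comm]

theorem kleinInvariant_quadratic {s t : F} (hs : A - s * x - s * t + x * t ≠ 0)
    (ht : A - t * x - t * s + x * s ≠ 0) :
    (kleinInvariant A s x t + kleinInvariant A t x s) * x ^ 2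
      - 2 * (A + kleinInvariant A s x t * kleinInvariant A t x s) * x
      + A * (kleinInvariant A s x t + kleinInvariant A t x s) = 0 := by
  unfold kleinInvariant
  generalize hD₁ : A - s * x - s * t + x * t = D₁ at hs ⊢
  generalize hD₂ : A - t * x - t * s + x * s = D₂ at ht ⊢
  field_simp
  subst hD₁ hD₂
  ring

theorem kleinInvariant_add_kleinInvariant_ne_zero {s t : F} (h2 : (2 : F) ≠ 0) (hx : x ≠ 0)
    (hAs : A - s * s ≠ 0) (hAt : A - t * t ≠ 0) (hs : A - s * x - s * t + x * t ≠ 0)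
    (ht : A - t * x - t * s + x * s ≠ 0) :
    kleinInvariant A s x t + kleinInvariant A t x s ≠ 0 := by
  have key : (kleinInvariant A s x t + kleinInvariant A t x s)
      * ((A - s * x - s * t + x * t) * (A - t * x - t * s + x * s))
      = 2 * x * (A - s * s) * (A - t * t) := by
    unfold kleinInvariant
    generalize hD₁ : A - s * x - s * t + x * t = D₁ at hs ⊢
    generalize hD₂ : A - t * x - t * s + x * s = D₂ at ht ⊢
    field_simp
    subst hD₁ hD₂
    ring
  intro h
  rw [h, zero_mul] at key
  exact (mul_ne_zero (mul_ne_zero (mul_ne_zero h2 hx) hAs) hAt) key.symm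

theorem mem_of_kleinInvariant_mem {S : Type*} [SetLike S F] [SubfieldClass S F] {L : S}
    (hD : A - x * y - x * z + y * z ≠ 0) (hAx : A - x * x ≠ 0) (hAy : A - y * y ≠ 0)
    (hA : A ∈ L) (hx : x ∈ L) (hy : y ∈ L) (hv : kleinInvariant A x y z ∈ L) : z ∈ L := by
  set v := kleinInvariant A x y z
  have hvD : v * (A - x * y - x * z + y * z) = A * (-x + y + z) - x * y * z :=
    div_mul_cancel₀ _ hD
  -- `v` is a Möbius function of `z` whose determinant is `-(A - x * x) * (A - y * y)`.
  have hden : v * (y - x) + x * y - A ≠ 0 := by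
    intro h
    apply mul_ne_zero hAx hAy
    linear_combination (-(A - x * y - x * z + y * z)) * h + (y - x) * hvD
  have hz : z = (v * (x * y - A) + A * (y - x)) / (v * (y - x) + x * y - A) := by
    rw [eq_div_iff hden]
    linear_combination hvD
  rw [hz]
  exact div_mem (add_mem (mul_mem hv (sub_mem (mul_mem hx hy) hA)) (mul_mem hA (sub_mem hy hx)))
    (sub_mem (add_mem (mul_mem hv (sub_mem hy hx)) (mul_mem hx hy)) hA)

theorem exists_aeval_eq_zero_of_kleinInvariant_mem {K : Type*} [Field K] [Algebra K F]
    {E : IntermediateField K F} {s t : F} (h2 : (2 : F) ≠ 0) (hx : x ≠ 0)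
    (hAs : A - s * s ≠ 0) (hAt : A - t * t ≠ 0) (hs : A - s * x - s * t + x * t ≠ 0)
    (ht : A - t * x - t * s + x * s ≠ 0) (hA : A ∈ E) (hu : kleinInvariant A s x t ∈ E)
    (hw : kleinInvariant A t x s ∈ E) :
    ∃ p : Polynomial E, p ≠ 0 ∧ p.natDegree ≤ 2 ∧ Polynomial.aeval x p = 0 :=
  exists_aeval_eq_zero_natDegree_le_two (add_mem hu hw)
    (neg_mem (mul_mem (ofNat_mem E 2) (add_mem hA (mul_mem hu hw)))) (mul_mem hA (add_mem hu hw))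
    (kleinInvariant_add_kleinInvariant_ne_zero h2 hx hAs hAt hs ht)
    (by linear_combination kleinInvariant_quadratic hs ht)

theorem adjoin_kleinInvariant_le_fixedField {K : Type*} [Field K] [Algebra K F] {a : K}
    (ha : a ≠ 0) (hx : x ≠ 0) (hy : y ≠ 0) (hz : z ≠ 0) {τ lam : F ≃ₐ[K] F}
    (hτx : τ x = algebraMap K F a / x) (hτy : τ y = algebraMap K F a / y) (hτz : τ z = z)
    (hlx : lam x = algebraMap K F a / x) (hly : lam y = y) (hlz : lam z = algebraMap K F a / z) :
    adjoin K {kleinInvariant (algebraMap K F a) x y z, kleinInvariant (algebraMap K F a) y x z,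
      kleinInvariant (algebraMap K F a) z x y} ≤ fixedField (Subgroup.closure {τ, lam}) := by
  have hA : algebraMap K F a ≠ 0 := (map_ne_zero _).2 ha
  rw [adjoin_le_iff]
  rintro v (rfl | rfl | rfl) <;> rw [SetLike.mem_coe, mem_fixedField_closure_iff] <;>
    rintro σ (rfl | rfl) <;>
    simp [map_kleinInvariant, hτx, hτy, hτz, hlx, hly, hlz, kleinInvariant_div_div_left,
      kleinInvariant_div_div_right, kleinInvariant_div_div_outer, hA, hx, hy, hz]

end KleinInvariant

open MvPolynomial

section GenericPoint

variable {σ K F : Type*} [Field K] [Field F] [Algebra (MvPolynomial σ K) F]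
  [IsFractionRing (MvPolynomial σ K) F]

local notation "ξ" i:max => algebraMap (MvPolynomial σ K) F (X i)

theorem algebraMap_ne_zero_of_constantCoeff_ne_zero {p : MvPolynomial σ K}
    (hp : constantCoeff p ≠ 0) : algebraMap (MvPolynomial σ K) F p ≠ 0 := by
  rw [Ne, IsFractionRing.to_map_eq_zero_iff]
  rintro rfl
  exact hp (map_zero _)

theorem algebraMap_X_ne_zero (i : σ) : ξ i ≠ 0 := by
  rw [Ne, IsFractionRing.to_map_eq_zero_iff]
  exact X_ne_zero i

variable [Algebra K F] [IsScalarTower K (MvPolynomial σ K) F]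

theorem algebraMap_sub_mul_sub_mul_add_mul_ne_zero {a : K} (ha : a ≠ 0) (i j k : σ) :
    algebraMap K F a - ξ i * ξ j - ξ i * ξ k + ξ j * ξ k ≠ 0 := by
  convert algebraMap_ne_zero_of_constantCoeff_ne_zero (F := F)
    (p := C a - X i * X j - X i * X k + X j * X k) (by simpa using ha) using 1
  simp [IsScalarTower.algebraMap_apply K (MvPolynomial σ K) F]

theorem algebraMap_sub_mul_self_ne_zero {a : K} (ha : a ≠ 0) (i : σ) :
    algebraMap K F a - ξ i * ξ i ≠ 0 := by
  simpa using algebraMap_sub_mul_sub_mul_add_mul_ne_zero (F := F) ha i i i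

theorem algebraMap_div_X_ne_X {a : K} (ha : a ≠ 0) (i : σ) :
    algebraMap K F a / ξ i ≠ ξ i := by
  rw [Ne, div_eq_iff (algebraMap_X_ne_zero i), ← sub_eq_zero]
  exact algebraMap_sub_mul_self_ne_zero ha i

theorem algEquiv_ext_of_X {g h : F ≃ₐ[K] F} (hX : ∀ i, g (ξ i) = h (ξ i)) : g = h := by
  have hcomp : (g : F →+* F).comp (algebraMap (MvPolynomial σ K) F)
      = (h : F →+* F).comp (algebraMap (MvPolynomial σ K) F) := by
    refine MvPolynomial.ringHom_ext (fun r => ?_) hX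
    show g _ = h _
    rw [← MvPolynomial.algebraMap_eq, ← IsScalarTower.algebraMap_apply, g.commutes, h.commutes]
  exact AlgEquiv.ext (RingHom.congr_fun (IsLocalization.ringHom_ext (nonZeroDivisors _) hcomp))

theorem IntermediateField.eq_top_of_algebraMap_X_mem {L : IntermediateField K F}
    (hX : ∀ i, ξ i ∈ L) : L = ⊤ := by
  have hpoly (p : MvPolynomial σ K) : algebraMap (MvPolynomial σ K) F p ∈ L := by
    induction p using MvPolynomial.induction_on with
    | C r =>
      rw [← MvPolynomial.algebraMap_eq, ← IsScalarTower.algebraMap_apply]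
      exact algebraMap_mem L r
    | add p q hp hq => rw [map_add]; exact add_mem hp hq
    | mul_X p i hp => rw [map_mul]; exact mul_mem hp (hX i)
  refine eq_top_iff.2 fun u _ => ?_
  obtain ⟨p, q, -, rfl⟩ := IsFractionRing.div_surjective (A := MvPolynomial σ K) u
  exact div_mem (hpoly p) (hpoly q)

theorem mul_self_eq_one_of_forall_eq_or_eq_div {a : K} (ha : a ≠ 0) {g : F ≃ₐ[K] F}
    (hg : ∀ i, g (ξ i) = ξ i ∨ g (ξ i) = algebraMap K F a / ξ i) : g * g = 1 := by
  refine algEquiv_ext_of_X (σ := σ) fun i => ?_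
  rcases hg i with h | h <;> simp [h, map_div₀, ha]

theorem commute_of_forall_eq_or_eq_div {a : K} {g h : F ≃ₐ[K] F}
    (hg : ∀ i, g (ξ i) = ξ i ∨ g (ξ i) = algebraMap K F a / ξ i)
    (hh : ∀ i, h (ξ i) = ξ i ∨ h (ξ i) = algebraMap K F a / ξ i) : g * h = h * g := by
  refine algEquiv_ext_of_X (σ := σ) fun i => ?_
  rcases hg i with h1 | h1 <;> rcases hh i with h2 | h2 <;> simp [h1, h2, map_div₀]

end GenericPoint

section ThreeVariables

variable {K F : Type*} [Field K] [Field F] [Algebra K F] [Algebra (MvPolynomial (Fin 3) K) F]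
  [IsScalarTower K (MvPolynomial (Fin 3) K) F] [IsFractionRing (MvPolynomial (Fin 3) K) F]

local notation "ξ" i:max => algebraMap (MvPolynomial (Fin 3) K) F (X i)

theorem card_closure_inversions_eq_four {a : K} (ha : a ≠ 0) {τ lam : F ≃ₐ[K] F}
    (hτx : τ (ξ 0) = algebraMap K F a / ξ 0) (hτy : τ (ξ 1) = algebraMap K F a / ξ 1)
    (hτz : τ (ξ 2) = ξ 2) (hlx : lam (ξ 0) = algebraMap K F a / ξ 0) (hly : lam (ξ 1) = ξ 1)
    (hlz : lam (ξ 2) = algebraMap K F a / ξ 2) :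
    Nat.card (Subgroup.closure {τ, lam}) = 4 := by
  have hτ : ∀ i, τ (ξ i) = ξ i ∨ τ (ξ i) = algebraMap K F a / ξ i := by
    intro i; fin_cases i <;> simp [hτx, hτy, hτz]
  have hl : ∀ i, lam (ξ i) = ξ i ∨ lam (ξ i) = algebraMap K F a / ξ i := by
    intro i; fin_cases i <;> simp [hlx, hly, hlz]
  refine Subgroup.card_closure_pair_of_involutive (mul_self_eq_one_of_forall_eq_or_eq_div ha hτ)
    (mul_self_eq_one_of_forall_eq_or_eq_div ha hl) (commute_of_forall_eq_or_eq_div hτ hl)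
    (fun h => ?_) (fun h => ?_) (fun h => ?_)
  · exact algebraMap_div_X_ne_X (F := F) ha (0 : Fin 3) (by rw [← hτx, h, AlgEquiv.one_apply])
  · exact algebraMap_div_X_ne_X (F := F) ha (2 : Fin 3) (by rw [← hlz, h, AlgEquiv.one_apply])
  · exact algebraMap_div_X_ne_X (F := F) ha (1 : Fin 3) (by rw [← hτy, h, hly])

theorem finiteDimensional_and_finrank_adjoin_kleinInvariant_le {a : K} (h2 : (2 : K) ≠ 0)
    (ha : a ≠ 0) :
    let E := adjoin K {kleinInvariant (algebraMap K F a) (ξ 0) (ξ 1) (ξ 2),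
      kleinInvariant (algebraMap K F a) (ξ 1) (ξ 0) (ξ 2),
      kleinInvariant (algebraMap K F a) (ξ 2) (ξ 0) (ξ 1)}
    FiniteDimensional E F ∧ Module.finrank E F ≤ 4 := by
  intro E
  have h2F : (2 : F) ≠ 0 := by
    rw [← map_ofNat (algebraMap K F) 2]; exact (map_ne_zero _).2 h2
  have hD := algebraMap_sub_mul_sub_mul_add_mul_ne_zero (σ := Fin 3) (F := F) ha
  have hsq := algebraMap_sub_mul_self_ne_zero (σ := Fin 3) (F := F) ha
  have hA : algebraMap K F a ∈ E := IntermediateField.algebraMap_mem E a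
  have hv₁ : kleinInvariant (algebraMap K F a) (ξ 0) (ξ 1) (ξ 2) ∈ E :=
    subset_adjoin K _ (by simp)
  have hv₂ : kleinInvariant (algebraMap K F a) (ξ 1) (ξ 0) (ξ 2) ∈ E :=
    subset_adjoin K _ (by simp)
  have hv₃ : kleinInvariant (algebraMap K F a) (ξ 2) (ξ 0) (ξ 1) ∈ E :=
    subset_adjoin K _ (by simp)
  obtain ⟨p, hp, hp2, hpx⟩ := exists_aeval_eq_zero_of_kleinInvariant_mem h2F
    (algebraMap_X_ne_zero 0) (hsq 1) (hsq 2) (hD 1 0 2) (hD 2 0 1) hA hv₂ hv₃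
  obtain ⟨q, hq, hq2, hqy⟩ := exists_aeval_eq_zero_of_kleinInvariant_mem h2F
    (algebraMap_X_ne_zero 1) (hsq 0) (hsq 2) (hD 0 1 2) (hD 2 1 0) hA hv₁
    (by rwa [kleinInvariant_comm])
  have htop : adjoin E {ξ 0, ξ 1} = ⊤ := restrictScalars_injective K <| by
    rw [restrictScalars_top]
    have hx : ξ 0 ∈ (adjoin E {ξ 0, ξ 1}).restrictScalars K := subset_adjoin E _ (by simp)
    have hy : ξ 1 ∈ (adjoin E {ξ 0, ξ 1}).restrictScalars K := subset_adjoin E _ (by simp)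
    refine IntermediateField.eq_top_of_algebraMap_X_mem (σ := Fin 3) fun i => ?_
    fin_cases i
    · exact hx
    · exact hy
    · exact mem_of_kleinInvariant_mem (hD 0 1 2) (hsq 0) (hsq 1)
        (IntermediateField.algebraMap_mem _ a) hx hy
        (IntermediateField.algebraMap_mem (adjoin E {ξ 0, ξ 1}) ⟨_, hv₁⟩)
  obtain ⟨hfin, hrank⟩ :=
    finiteDimensional_and_finrank_le_of_adjoin_pair_eq_top hp hq hpx hqy htop
  exact ⟨hfin, hrank.trans (Nat.mul_le_mul hp2 hq2)⟩

end ThreeVariables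

theorem fixed_field_G311 (K F : Type*) [Field K] [Field F]
    [Algebra K F] [Algebra (MvPolynomial (Fin 3) K) F]
    [IsScalarTower K (MvPolynomial (Fin 3) K) F]
    [IsFractionRing (MvPolynomial (Fin 3) K) F]
    (h2 : (2 : K) ≠ 0) (a : K) (ha : a ≠ 0)
    (x y z : F)
    (hx : x = algebraMap (MvPolynomial (Fin 3) K) F (X 0))
    (hy : y = algebraMap (MvPolynomial (Fin 3) K) F (X 1))
    (hz : z = algebraMap (MvPolynomial (Fin 3) K) F (X 2))
    (τ lam : F ≃ₐ[K] F)
    (hτx : τ x = algebraMap K F a / x) (hτy : τ y = algebraMap K F a / y) (hτz : τ z = z)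
    (hlx : lam x = algebraMap K F a / x) (hly : lam y = y) (hlz : lam z = algebraMap K F a / z) :
    fixedField (Subgroup.closure {τ, lam}) =
      adjoin K
        {(algebraMap K F a * (-x + y + z) - x * y * z) /
            (algebraMap K F a - x * y - x * z + y * z),
         (algebraMap K F a * (x - y + z) - x * y * z) /
            (algebraMap K F a - x * y + x * z - y * z),
         (algebraMap K F a * (x + y - z) - x * y * z) /
            (algebraMap K F a + x * y - x * z - y * z)} := by
  subst hx hy hz
  have hG := card_closure_inversions_eq_four ha hτx hτy hτz hlx hly hlz
  obtain ⟨_, hrank⟩ := finiteDimensional_and_finrank_adjoin_kleinInvariant_le (F := F) h2 ha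
  have hle := adjoin_kleinInvariant_le_fixedField ha (algebraMap_X_ne_zero 0)
    (algebraMap_X_ne_zero 1) (algebraMap_X_ne_zero 2) hτx hτy hτz hlx hly hlz
  rw [fixedField_eq_of_le_of_finrank_le hle (hG ▸ hrank)]
  congr 3
  · unfold kleinInvariant; ring
  · congr 1; unfold kleinInvariant; ring
end

section
/- Let K be a field of characteristic not 2, let a, b, c ∈ K with a ≠ 0 and suppose a = d² is a square in K. Let τ be the K-automorphism of K(x,y) with τ(x) = −x, τ(y) = (ax⁴ + bx² + c)/y. Then the fixed field K(x,y)^⟨τ⟩ is rational over K; explicitly, with X = (y + (ax⁴+bx²+c)/y)/2, Y = (y − (ax⁴+bx²+c)/y)/(2x), Z = x², one has K(x,y)^⟨τ⟩ = K(X + dZ, Y). -/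
/-!
Write `f = a x⁴ + b x² + c`. The involution `τ` swaps `y` and `f / y`, so `X = (y + f/y)/2` and
`Y = (y - f/y)/(2x)` are fixed, `y = X + x Y`, and `X² - Z Y² = f = d² Z² + b Z + c`. The last
relation gives `(X + d Z)² - c = Z (Y² + b + 2 d (X + d Z))`, so `Z`, and then `X`, lie in
`L = K(X + d Z, Y)`. Hence `K(x, y) = L(x)` with `x² ∈ L`, every element is `p + q x` with
`p, q ∈ L`, and since `τ` fixes `L` and negates `x`, the fixed field is exactly `L`.
-/

open MvPolynomial IntermediateField

section FractionField

variable {σ K F : Type*} [Field K] [Field F] [Algebra K F] [Algebra (MvPolynomial σ K) F]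
  [IsScalarTower K (MvPolynomial σ K) F] [IsFractionRing (MvPolynomial σ K) F]

theorem algebraicIndependent_algebraMap_X :
    AlgebraicIndependent K fun i ↦ algebraMap (MvPolynomial σ K) F (X i) :=
  (algebraicIndependent_X σ K).map' (f := IsScalarTower.toAlgHom K (MvPolynomial σ K) F)
    (IsFractionRing.injective _ _)

theorem IntermediateField.eq_top_of_algebraMap_X_mem_s10 {L : Type*} [Field L] [Algebra K L]
    [Algebra L F] [IsScalarTower K L F] (E : IntermediateField L F)
    (hE : ∀ i, algebraMap (MvPolynomial σ K) F (X i) ∈ E) : E = ⊤ := by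
  have hpoly (p : MvPolynomial σ K) : algebraMap (MvPolynomial σ K) F p ∈ E := by
    induction p using MvPolynomial.induction_on with
    | C k =>
      rw [← MvPolynomial.algebraMap_eq, ← IsScalarTower.algebraMap_apply,
        IsScalarTower.algebraMap_apply K L F]
      exact E.algebraMap_mem _
    | add p q hp hq => simpa using add_mem hp hq
    | mul_X p i hp => simpa using mul_mem hp (hE i)
  refine eq_top_iff.2 fun z _ ↦ ?_
  obtain ⟨p, q, -, rfl⟩ := IsFractionRing.div_surjective (A := MvPolynomial σ K) z
  exact div_mem (hpoly p) (hpoly q)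

end FractionField

section Involution

variable {K F : Type*} [Field K] [Field F] [Algebra K F]

theorem exists_eq_add_mul_of_mem_adjoin_simple {x : F} {k : K} (hx : x ^ 2 = algebraMap K F k)
    {z : F} (hz : z ∈ K⟮x⟯) : ∃ p q : K, z = algebraMap K F p + algebraMap K F q * x := by
  have hroot : Polynomial.aeval x (Polynomial.X ^ 2 - Polynomial.C k) = 0 := by simp [hx]
  have hmonic : (Polynomial.X ^ 2 - Polynomial.C k).Monic :=
    Polynomial.monic_X_pow_sub_C k two_ne_zero
  rw [← mem_toSubalgebra, adjoin_simple_toSubalgebra_of_isAlgebraic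
    ⟨_, hmonic.ne_zero, hroot⟩, Algebra.adjoin_singleton_eq_range_aeval] at hz
  obtain ⟨r, rfl⟩ := hz
  change ∃ p q, Polynomial.aeval x r = _
  rw [← Polynomial.aeval_modByMonic_eq_self_of_root hroot]
  set s := r %ₘ (Polynomial.X ^ 2 - Polynomial.C k)
  have hdeg : s.degree ≤ 1 := by
    have := Polynomial.degree_modByMonic_lt r hmonic
    rw [Polynomial.degree_X_pow_sub_C two_pos] at this
    exact Order.le_of_lt_succ this
  refine ⟨s.coeff 0, s.coeff 1, ?_⟩
  conv_lhs => rw [Polynomial.eq_X_add_C_of_degree_le_one hdeg]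
  simp [add_comm]

theorem IntermediateField.mem_fixedField_zpowers_iff_s10 {τ : F ≃ₐ[K] F} {z : F} :
    z ∈ fixedField (Subgroup.zpowers τ) ↔ τ z = z := by
  refine ⟨fun h ↦ h ⟨τ, Subgroup.mem_zpowers τ⟩, fun h ↦ ?_⟩
  have : Subgroup.zpowers τ ≤ MulAction.stabilizer (F ≃ₐ[K] F) z := Subgroup.zpowers_le.2 h
  exact fun σ ↦ this σ.2

theorem IntermediateField.fixedField_zpowers_eq_of_neg (h2 : (2 : F) ≠ 0) {τ : F ≃ₐ[K] F}
    {L : IntermediateField K F} (hL : L ≤ fixedField (Subgroup.zpowers τ)) {x : F} (hx0 : x ≠ 0)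
    (hτx : τ x = -x) (hx2 : x ^ 2 ∈ L) (htop : L⟮x⟯ = ⊤) :
    fixedField (Subgroup.zpowers τ) = L := by
  refine le_antisymm (fun z hz ↦ ?_) hL
  obtain ⟨p, q, rfl⟩ := exists_eq_add_mul_of_mem_adjoin_simple (k := ⟨x ^ 2, hx2⟩) rfl
    (htop ▸ mem_top : z ∈ L⟮x⟯)
  simp only [IntermediateField.algebraMap_apply] at hz ⊢
  rw [mem_fixedField_zpowers_iff_s10, map_add, map_mul, hτx,
    mem_fixedField_zpowers_iff_s10.1 (hL p.2), mem_fixedField_zpowers_iff_s10.1 (hL q.2)] at hz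
  have hq : (q : F) = 0 := by
    simpa [h2, hx0] using (by linear_combination -hz : 2 * (q : F) * x = 0)
  simp [hq]

end Involution

section Quartic

variable {K F : Type*} [Field K] [Field F] [Algebra K F] {f x y X Y : F}

theorem eq_add_mul_of_eq_div (h2 : (2 : F) ≠ 0) (hx : x ≠ 0) (hX : X = (y + f / y) / 2)
    (hY : Y = (y - f / y) / (2 * x)) : y = X + Y * x := by
  rw [hX, hY, div_mul_eq_mul_div, mul_div_mul_right _ _ hx, ← add_div,
    add_add_sub_cancel, ← two_mul, mul_div_cancel_left₀ _ h2]

theorem sq_sub_sq_mul_sq_eq (h2 : (2 : F) ≠ 0) (hx : x ≠ 0) (hy : y ≠ 0)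
    (hX : X = (y + f / y) / 2) (hY : Y = (y - f / y) / (2 * x)) : X ^ 2 - x ^ 2 * Y ^ 2 = f := by
  rw [hX, hY]; field_simp; ring

theorem adjoin_le_fixedField_zpowers {τ : F ≃ₐ[K] F} (hf0 : f ≠ 0) (hτx : τ x = -x)
    (hτy : τ y = f / y) (hτf : τ f = f) (hX : X = (y + f / y) / 2)
    (hY : Y = (y - f / y) / (2 * x)) (d : K) :
    K⟮X + algebraMap K F d * x ^ 2, Y⟯ ≤ fixedField (Subgroup.zpowers τ) := by
  refine adjoin_le_iff.2 (Set.insert_subset_iff.2 ⟨?_, Set.singleton_subset_iff.2 ?_⟩) <;>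
    simp only [SetLike.mem_coe, mem_fixedField_zpowers_iff_s10, hX, hY, map_add, map_sub, map_mul,
      map_div₀, map_pow, map_ofNat, AlgEquiv.commutes, hτx, hτy, hτf, div_div_cancel₀ hf0,
      mul_neg, div_neg] <;>
    ring

theorem sq_add_mul_ne_of_algebraicIndependent (h2 : (2 : F) ≠ 0) (hxy : AlgebraicIndependent K ![x, y])
    {a b c : K} (hf : f = algebraMap K F a * x ^ 4 + algebraMap K F b * x ^ 2 + algebraMap K F c)
    (d : K) : ((y + f / y) / 2 + algebraMap K F d * x ^ 2) ^ 2 ≠ algebraMap K F c := by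
  have hy0 : y ≠ 0 := by simpa using hxy.ne_zero 1
  intro h
  have hrel : (y ^ 2 + f + 2 * algebraMap K F d * x ^ 2 * y) ^ 2 = 4 * algebraMap K F c * y ^ 2 := by
    rw [← h]; field_simp; ring
  set Q : MvPolynomial (Fin 2) K :=
    (X 1 ^ 2 + (C a * X 0 ^ 4 + C b * X 0 ^ 2 + C c) + 2 * C d * X 0 ^ 2 * X 1) ^ 2
      - 4 * C c * X 1 ^ 2
  have hQ : Q = 0 := algebraicIndependent_iff.1 hxy Q (by simp [Q, ← hf, hrel])
  -- specialising `x ↦ 0` leaves `(y ^ 2 - c) ^ 2`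
  have hspec := congrArg (aeval ![0, (Polynomial.X : Polynomial K)]) hQ
  simp only [Q, map_sub, map_add, map_mul, map_pow, map_ofNat, aeval_C, aeval_X,
    Matrix.cons_val_zero, Matrix.cons_val_one, map_zero, Polynomial.algebraMap_eq] at hspec
  exact pow_ne_zero 2 (Polynomial.X_pow_sub_C_ne_zero two_pos c) (by linear_combination hspec)

theorem mem_adjoin_of_sq_sub_mul_sq_eq {b c d : K} {Z : F}
    (h : X ^ 2 - Z * Y ^ 2 =
      algebraMap K F d ^ 2 * Z ^ 2 + algebraMap K F b * Z + algebraMap K F c)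
    (hc : (X + algebraMap K F d * Z) ^ 2 ≠ algebraMap K F c) :
    Z ∈ K⟮X + algebraMap K F d * Z, Y⟯ ∧ X ∈ K⟮X + algebraMap K F d * Z, Y⟯ := by
  set L := K⟮X + algebraMap K F d * Z, Y⟯
  set u := X + algebraMap K F d * Z
  set D := Y ^ 2 + algebraMap K F b + 2 * algebraMap K F d * u
  have hI : u ^ 2 - algebraMap K F c = Z * D := by linear_combination h
  have hD : D ≠ 0 := fun hD ↦ hc (by rwa [hD, mul_zero, sub_eq_zero] at hI)
  have huL : u ∈ L := subset_adjoin K _ (Set.mem_insert _ _)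
  have hYL : Y ∈ L := subset_adjoin K _ (Set.mem_insert_of_mem _ rfl)
  have hZL : Z ∈ L := by
    rw [eq_div_of_mul_eq hD hI.symm]
    exact div_mem (sub_mem (pow_mem huL 2) (L.algebraMap_mem c))
      (add_mem (add_mem (pow_mem hYL 2) (L.algebraMap_mem b))
        (mul_mem (mul_mem (ofNat_mem L 2) (L.algebraMap_mem d)) huL))
  refine ⟨hZL, ?_⟩
  rw [show X = u - algebraMap K F d * Z by ring]
  exact sub_mem huL (mul_mem (L.algebraMap_mem d) hZL)

end Quartic

theorem fixed_field_thInv_II_i_general (K F : Type*) [Field K] [Field F]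
    [Algebra K F] [Algebra (MvPolynomial (Fin 2) K) F]
    [IsScalarTower K (MvPolynomial (Fin 2) K) F]
    [IsFractionRing (MvPolynomial (Fin 2) K) F]
    (h2 : (2 : K) ≠ 0)
    (a b c d : K) (had : a = d ^ 2)
    (x y : F)
    (hx : x = algebraMap (MvPolynomial (Fin 2) K) F (X 0))
    (hy : y = algebraMap (MvPolynomial (Fin 2) K) F (X 1))
    (τ : F ≃ₐ[K] F)
    (hτx : τ x = -x)
    (hτy : τ y = (algebraMap K F a * x ^ 4 + algebraMap K F b * x ^ 2 + algebraMap K F c) / y)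
    (Xg Yg Zg : F)
    (hX : Xg = (y + (algebraMap K F a * x ^ 4 + algebraMap K F b * x ^ 2 + algebraMap K F c) / y) / 2)
    (hY : Yg = (y - (algebraMap K F a * x ^ 4 + algebraMap K F b * x ^ 2 + algebraMap K F c) / y) / (2 * x))
    (hZ : Zg = x ^ 2) :
    fixedField (Subgroup.zpowers τ) = adjoin K {Xg + algebraMap K F d * Zg, Yg} := by
  subst hZ
  have hxy : AlgebraicIndependent K ![x, y] := by
    convert algebraicIndependent_algebraMap_X (σ := Fin 2) (K := K) (F := F) using 1
    ext i; fin_cases i <;> simp [hx, hy]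
  have hx0 : x ≠ 0 := by simpa using hxy.ne_zero 0
  have hy0 : y ≠ 0 := by simpa using hxy.ne_zero 1
  have h2F : (2 : F) ≠ 0 := by
    rw [← map_ofNat (algebraMap K F) 2]; exact (map_ne_zero _).2 h2
  set f := algebraMap K F a * x ^ 4 + algebraMap K F b * x ^ 2 + algebraMap K F c with hf
  have hτf : τ f = f := by simp only [hf, map_add, map_mul, map_pow, hτx, AlgEquiv.commutes]; ring
  have hf0 : f ≠ 0 := fun h ↦ hy0 (τ.injective (by rw [hτy, h, zero_div, map_zero]))
  have hnorm : Xg ^ 2 - x ^ 2 * Yg ^ 2 =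
      algebraMap K F d ^ 2 * (x ^ 2) ^ 2 + algebraMap K F b * x ^ 2 + algebraMap K F c := by
    rw [sq_sub_sq_mul_sq_eq h2F hx0 hy0 hX hY, hf, had, map_pow]; ring
  obtain ⟨hZL, hXL⟩ := mem_adjoin_of_sq_sub_mul_sq_eq hnorm
    (hX ▸ sq_add_mul_ne_of_algebraicIndependent h2F hxy hf d)
  set L := K⟮Xg + algebraMap K F d * x ^ 2, Yg⟯
  have hxL : x ∈ L⟮x⟯ := mem_adjoin_simple_self L x
  have htop : L⟮x⟯ = ⊤ := by
    refine eq_top_of_algebraMap_X_mem_s10 (σ := Fin 2) (K := K) _ fun i ↦ ?_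
    fin_cases i
    · simpa [← hx] using hxL
    · simp only [Fin.mk_one, ← hy, eq_add_mul_of_eq_div h2F hx0 hX hY]
      exact add_mem (IntermediateField.algebraMap_mem _ (⟨Xg, hXL⟩ : L))
        (mul_mem (IntermediateField.algebraMap_mem _ (⟨Yg, subset_adjoin K _ (by simp)⟩ : L)) hxL)
  exact fixedField_zpowers_eq_of_neg h2F (adjoin_le_fixedField_zpowers hf0 hτx hτy hτf hX hY d)
    hx0 hτx hZL htop

theorem fixed_field_thInv_II_i (K F : Type*) [Field K] [Field F]
    [Algebra K F] [Algebra (MvPolynomial (Fin 2) K) F]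
    [IsScalarTower K (MvPolynomial (Fin 2) K) F]
    [IsFractionRing (MvPolynomial (Fin 2) K) F]
    (h2 : (2 : K) ≠ 0)
    (a b c d : K) (ha : a ≠ 0) (had : a = d ^ 2)
    (x y : F)
    (hx : x = algebraMap (MvPolynomial (Fin 2) K) F (X 0))
    (hy : y = algebraMap (MvPolynomial (Fin 2) K) F (X 1))
    (τ : F ≃ₐ[K] F)
    (hτx : τ x = -x)
    (hτy : τ y = (algebraMap K F a * x ^ 4 + algebraMap K F b * x ^ 2 + algebraMap K F c) / y)
    (Xg Yg Zg : F)
    (hX : Xg = (y + (algebraMap K F a * x ^ 4 + algebraMap K F b * x ^ 2 + algebraMap K F c) / y) / 2)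
    (hY : Yg = (y - (algebraMap K F a * x ^ 4 + algebraMap K F b * x ^ 2 + algebraMap K F c) / y) / (2 * x))
    (hZ : Zg = x ^ 2) :
    fixedField (Subgroup.zpowers τ) = adjoin K {Xg + algebraMap K F d * Zg, Yg} :=
  fixed_field_thInv_II_i_general K F h2 a b c d had x y hx hy τ hτx hτy Xg Yg Zg hX hY hZ
end
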